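/- arXiv:1202.1111 — 5 statements merged into one kernel-verified Lean document; each statement's English description precedes it below -/
import Mathlib

section
/- Let k ≥ 2, 1 ≤ d ≤ k, and b ≥ 1 be integers. A finite k-uniform hypergraph (V,E) admits a (d,b)-orientation if and only if every subset E' ⊆ E satisfies cap(E') ≥ d·|E'|, where cap(E') = Σ_{v∈V} min(b, |{e ∈ E' : v ∈ e}|). -/
open scoped Classical
set_option linter.unusedSectionVars false
namespace OrientAux
variable {V : Type*} [Fintype V] [DecidableEq V]

noncomputable def hload (E : Finset (Finset V)) (D : Finset V → Finset V) (v : V) : ℕ :=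
  (E.filter fun e => v ∈ D e).card

def hValid (E : Finset (Finset V)) (d b : ℕ) (D : Finset V → Finset V) : Prop :=
  (∀ e ∈ E, D e ⊆ e ∧ (D e).card ≤ d) ∧ ∀ v : V, hload E D v ≤ b

noncomputable def htotal (E : Finset (Finset V)) (D : Finset V → Finset V) : ℕ :=
  ∑ e ∈ E, (D e).card

lemma total_eq (E : Finset (Finset V)) (D : Finset V → Finset V) :
    htotal E D = ∑ v : V, hload E D v := by
  unfold htotal hload
  simp_rw [Finset.card_filter]
  rw [Finset.sum_comm]
  congr 1
  ext e
  rw [Finset.sum_ite_mem, Finset.univ_inter, Finset.card_eq_sum_ones]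

lemma hload_congr {E : Finset (Finset V)} {D D' : Finset V → Finset V} {v : V}
    (h : ∀ e ∈ E, (v ∈ D e ↔ v ∈ D' e)) : hload E D v = hload E D' v := by
  unfold hload
  congr 1
  exact Finset.filter_congr (by intro e he; simp [h e he])

lemma hload_insert {E : Finset (Finset V)} {D : Finset V → Finset V} {a : Finset V} {v : V}
    (ha : a ∈ E) (hv : v ∉ D a) :
    hload E (Function.update D a (insert v (D a))) v = hload E D v + 1 := by
  unfold hload
  have hfilter : (E.filter fun e => v ∈ Function.update D a (insert v (D a)) e)
      = insert a (E.filter fun e => v ∈ D e) := by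
    ext e
    simp only [Finset.mem_filter, Finset.mem_insert]
    by_cases h : e = a
    · subst h
      simp [Function.update_self, ha]
    · simp [Function.update_of_ne h, h]
  rw [hfilter, Finset.card_insert_of_notMem (by simp [hv])]

lemma hload_insert_ne {E : Finset (Finset V)} {D : Finset V → Finset V} {a : Finset V} {v w : V}
    (hw : w ≠ v) :
    hload E (Function.update D a (insert v (D a))) w = hload E D w := by
  apply hload_congr
  intro e he
  by_cases h : e = a
  · subst h; simp [Function.update_self, hw]
  · simp [Function.update_of_ne h]

lemma hload_step {E : Finset (Finset V)} {D : Finset V → Finset V} {a c : Finset V} {u : V}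
    (ha : a ∈ E) (hc : c ∈ E) (hua : u ∉ D a) (huc : u ∈ D c) (v : V) :
    hload E (Function.update (Function.update D a (insert u (D a))) c ((D c).erase u)) v
      = hload E D v := by
  have hac : a ≠ c := by rintro rfl; exact hua huc
  by_cases hv : v = u
  · subst hv
    unfold hload
    have hfilter : (E.filter fun e =>
        v ∈ Function.update (Function.update D a (insert v (D a))) c ((D c).erase v) e)
        = insert a ((E.filter fun e => v ∈ D e).erase c) := by
      ext e
      simp only [Finset.mem_filter, Finset.mem_insert, Finset.mem_erase]
      by_cases h1 : e = c
      · subst h1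
        simp [Function.update_self, hac, Ne.symm hac]
      · rw [Function.update_of_ne h1]
        by_cases h2 : e = a
        · subst h2
          simp [Function.update_self, ha, h1]
        · rw [Function.update_of_ne h2]
          simp [h1, h2]
    rw [hfilter]
    have hcmem : c ∈ (E.filter fun e => v ∈ D e) := Finset.mem_filter.mpr ⟨hc, huc⟩
    have hanot : a ∉ (E.filter fun e => v ∈ D e).erase c := by
      simp [Finset.mem_erase, Finset.mem_filter, hua]
    rw [Finset.card_insert_of_notMem hanot, Finset.card_erase_of_mem hcmem]
    have : 0 < (E.filter fun e => v ∈ D e).card := Finset.card_pos.mpr ⟨c, hcmem⟩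
    omega
  · apply hload_congr
    intro e he
    by_cases h1 : e = c
    · subst h1
      simp [Function.update_self, Finset.mem_erase, hv]
    · rw [Function.update_of_ne h1]
      by_cases h2 : e = a
      · subst h2; simp [Function.update_self, hv]
      · rw [Function.update_of_ne h2]

/-- One step of the alternating-path relation. -/
def hStep (E : Finset (Finset V)) (p q : (Finset V → Finset V) × Finset V) : Prop :=
  ∃ u, u ∈ p.2 ∧ u ∉ p.1 p.2 ∧ u ∈ p.1 q.2 ∧ q.2 ∈ E ∧
    q.1 = Function.update (Function.update p.1 p.2 (insert u (p.1 p.2))) q.2 ((p.1 q.2).erase u)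

def hExposed (E : Finset (Finset V)) (D0 : Finset V → Finset V) (e0 : Finset V) (v : V) : Prop :=
  ∃ q : (Finset V → Finset V) × Finset V,
    Relation.ReflTransGen (hStep E) (D0, e0) q ∧ v ∈ q.2 ∧ v ∉ q.1 q.2

lemma hReach_inv {E : Finset (Finset V)} {d b : ℕ} {D0 : Finset V → Finset V} {e0 : Finset V}
    (hV0 : hValid E d b D0) (he0 : e0 ∈ E) (hc0 : (D0 e0).card < d) :
    ∀ p : (Finset V → Finset V) × Finset V, Relation.ReflTransGen (hStep E) (D0, e0) p →
      hValid E d b p.1 ∧ (∀ v, hload E p.1 v = hload E D0 v) ∧ (p.1 p.2).card < d ∧ p.2 ∈ E ∧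
      (∀ e', (¬ ∃ D', Relation.ReflTransGen (hStep E) (D0, e0) (D', e')) → p.1 e' = D0 e') ∧
      (∀ e'' v, v ∈ p.1 e'' → v ∉ D0 e'' → hExposed E D0 e0 v) := by
  intro p hp
  induction hp with
  | refl => exact ⟨hV0, fun _ => rfl, hc0, he0, fun _ _ => rfl, fun _ v h1 h2 => absurd h1 h2⟩
  | @tail p q hpre hstep ih =>
    obtain ⟨hVp, hloadp, hcardp, hmemp, hfrozen, hexp⟩ := ih
    obtain ⟨u, hu2, hu3, hu4, hq2, hq1⟩ := hstep
    set D := p.1 with hD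
    set a := p.2 with ha
    set c := q.2 with hc
    have hac : a ≠ c := by rintro h; rw [h] at hu3; exact hu3 hu4
    have hq1a : q.1 a = insert u (D a) := by
      rw [hq1, Function.update_of_ne hac, Function.update_self]
    have hq1c : q.1 c = (D c).erase u := by
      rw [hq1, Function.update_self]
    have hq1e : ∀ e, e ≠ a → e ≠ c → q.1 e = D e := by
      intro e h1 h2
      rw [hq1, Function.update_of_ne h2, Function.update_of_ne h1]
    have hloadq : ∀ v, hload E q.1 v = hload E D v := by
      intro v
      rw [hq1]
      exact hload_step hmemp hq2 hu3 hu4 v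
    have hucard : 0 < (D c).card := Finset.card_pos.mpr ⟨u, hu4⟩
    refine ⟨?_, fun v => (hloadq v).trans (hloadp v), ?_, hq2, ?_, ?_⟩
    · constructor
      · intro e he
        by_cases h1 : e = a
        · subst h1
          rw [hq1a]
          refine ⟨Finset.insert_subset hu2 (hVp.1 _ he).1, ?_⟩
          rw [Finset.card_insert_of_notMem hu3]
          omega
        · by_cases h2 : e = c
          · subst h2
            rw [hq1c]
            exact ⟨(Finset.erase_subset _ _).trans (hVp.1 _ he).1,
              le_trans (Finset.card_le_card (Finset.erase_subset _ _)) (hVp.1 _ he).2⟩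
          · rw [hq1e e h1 h2]; exact hVp.1 _ he
      · intro v
        rw [hloadq v]
        exact hVp.2 v
    · rw [hq1c, Finset.card_erase_of_mem hu4]
      have := (hVp.1 c hq2).2
      omega
    · intro e' hne'
      have h1 : e' ≠ a := by
        rintro rfl
        exact hne' ⟨p.1, hpre⟩
      have h2 : e' ≠ c := by
        rintro rfl
        exact hne' ⟨q.1, hpre.tail ⟨u, hu2, hu3, hu4, hq2, hq1⟩⟩
      rw [hq1e e' h1 h2]
      exact hfrozen e' hne'
    · intro e'' v hv1 hv2
      by_cases h1 : e'' = a
      · subst h1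
        rw [hq1a] at hv1
        rcases Finset.mem_insert.mp hv1 with rfl | hv1'
        · exact ⟨p, hpre, hu2, hu3⟩
        · exact hexp _ v hv1' hv2
      · by_cases h2 : e'' = c
        · subst h2
          rw [hq1c] at hv1
          exact hexp _ v (Finset.mem_of_mem_erase hv1) hv2
        · rw [hq1e e'' h1 h2] at hv1
          exact hexp _ v hv1 hv2

lemma exposed_load {E : Finset (Finset V)} {d b : ℕ} {D0 : Finset V → Finset V} {e0 : Finset V}
    (hV0 : hValid E d b D0) (he0 : e0 ∈ E) (hc0 : (D0 e0).card < d)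
    (hmax : ∀ D, hValid E d b D → htotal E D ≤ htotal E D0)
    {v : V} (hv : hExposed E D0 e0 v) : hload E D0 v = b := by
  obtain ⟨q, hq, hv2, hv3⟩ := hv
  obtain ⟨hVq, hloadq, hcardq, hmemq, -, -⟩ := hReach_inv hV0 he0 hc0 q hq
  refine le_antisymm (hV0.2 v) ?_
  by_contra hlt
  push_neg at hlt
  set D' := Function.update q.1 q.2 (insert v (q.1 q.2)) with hD'
  have hloadv : hload E D' v = hload E q.1 v + 1 := hload_insert hmemq hv3
  have hloadw : ∀ w, w ≠ v → hload E D' w = hload E q.1 w := fun w hw => hload_insert_ne hw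
  have hvalid' : hValid E d b D' := by
    constructor
    · intro e he
      by_cases h : e = q.2
      · subst h
        rw [hD', Function.update_self]
        refine ⟨Finset.insert_subset hv2 (hVq.1 _ he).1, ?_⟩
        rw [Finset.card_insert_of_notMem hv3]
        omega
      · rw [hD', Function.update_of_ne h]
        exact hVq.1 _ he
    · intro w
      by_cases h : w = v
      · subst h
        rw [hloadv, hloadq]
        omega
      · rw [hloadw w h, hloadq]
        exact hV0.2 w
  have htot' : htotal E D' = htotal E D0 + 1 := by
    rw [total_eq, total_eq]
    have h1 : ∀ w : V, hload E D' w = hload E D0 w + (if w = v then 1 else 0) := by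
      intro w
      by_cases h : w = v
      · subst h; rw [hloadv, hloadq]; simp
      · rw [hloadw w h, hloadq]; simp [h]
    simp_rw [h1]
    rw [Finset.sum_add_distrib, Finset.sum_ite_eq' Finset.univ v (fun _ => 1)]
    simp
  have := hmax D' hvalid'
  omega

lemma exposed_closure {E : Finset (Finset V)} {d b : ℕ} {D0 : Finset V → Finset V} {e0 : Finset V}
    (hV0 : hValid E d b D0) (he0 : e0 ∈ E) (hc0 : (D0 e0).card < d)
    {v : V} (hv : hExposed E D0 e0 v) :
    ∀ e' ∈ E, v ∈ D0 e' → ∃ D', Relation.ReflTransGen (hStep E) (D0, e0) (D', e') := by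
  intro e' he' hvD0
  by_cases hr : ∃ D', Relation.ReflTransGen (hStep E) (D0, e0) (D', e')
  · exact hr
  · obtain ⟨q, hq, hv2, hv3⟩ := hv
    obtain ⟨-, -, -, -, hfrozen, -⟩ := hReach_inv hV0 he0 hc0 q hq
    have hqe' : v ∈ q.1 e' := by rw [hfrozen e' hr]; exact hvD0
    refine ⟨Function.update (Function.update q.1 q.2 (insert v (q.1 q.2))) e' ((q.1 e').erase v),
      hq.tail ⟨v, hv2, hv3, hqe', he', rfl⟩⟩

end OrientAux

/-- A finite `k`-uniform hypergraph `(V, E)` admits a `(d,b)`-orientation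
iff every `E' ⊆ E` satisfies `cap(E') ≥ d·|E'|`, where
`cap(E') = Σ_{v ∈ V} min(b, #{e ∈ E' : v ∈ e})`. -/
theorem orientation_iff_capacity {V : Type*} [Fintype V] [DecidableEq V]
    (k d b : ℕ) (hk : 2 ≤ k) (hd1 : 1 ≤ d) (hdk : d ≤ k) (hb : 1 ≤ b)
    (E : Finset (Finset V)) (hE : ∀ e ∈ E, e.card = k) :
    (∃ D : Finset V → Finset V,
        (∀ e ∈ E, D e ⊆ e ∧ (D e).card = d) ∧
        (∀ v : V, (E.filter fun e => v ∈ D e).card ≤ b))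
      ↔ ∀ E' ⊆ E, d * E'.card ≤ ∑ v : V, min b ((E'.filter fun e => v ∈ e).card) := by
  constructor
  · rintro ⟨D, hD, hDb⟩ E' hE'
    have key : ∀ v : V, OrientAux.hload E' D v ≤ min b ((E'.filter fun e => v ∈ e).card) := by
      intro v
      refine le_min ?_ ?_
      · exact le_trans (Finset.card_le_card (Finset.filter_subset_filter _ hE')) (hDb v)
      · refine Finset.card_le_card ?_
        intro e he
        obtain ⟨heE', hv⟩ := Finset.mem_filter.mp he
        exact Finset.mem_filter.mpr ⟨heE', (hD e (hE' heE')).1 hv⟩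
    calc d * E'.card = ∑ e ∈ E', (D e).card := by
          rw [Finset.sum_congr rfl (fun e he => (hD e (hE' he)).2), Finset.sum_const,
            smul_eq_mul, mul_comm]
      _ = ∑ v : V, OrientAux.hload E' D v := OrientAux.total_eq E' D
      _ ≤ ∑ v : V, min b ((E'.filter fun e => v ∈ e).card) :=
          Finset.sum_le_sum (fun v _ => key v)
  · intro hcap
    set P : ℕ → Prop := fun n => ∃ D, OrientAux.hValid E d b D ∧ OrientAux.htotal E D = n with hP
    have hP0 : P 0 := by
      refine ⟨fun _ => ∅, ⟨fun e _ => ⟨Finset.empty_subset e, by simp⟩, fun v => ?_⟩, ?_⟩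
      · simp [OrientAux.hload]
      · simp [OrientAux.htotal]
    have hbound : ∀ D, OrientAux.hValid E d b D → OrientAux.htotal E D ≤ d * E.card := by
      intro D hD
      calc OrientAux.htotal E D ≤ ∑ _e ∈ E, d := Finset.sum_le_sum (fun e he => (hD.1 e he).2)
        _ = d * E.card := by rw [Finset.sum_const, smul_eq_mul, mul_comm]
    obtain ⟨D0, hV0, hT0⟩ := Nat.findGreatest_spec (P := P) (Nat.zero_le (d * E.card)) hP0
    have hmax : ∀ D, OrientAux.hValid E d b D → OrientAux.htotal E D ≤ OrientAux.htotal E D0 := by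
      intro D hD
      rw [hT0]
      exact Nat.le_findGreatest (hbound D hD) ⟨D, hD, rfl⟩
    have hfull : ∀ e ∈ E, (D0 e).card = d := by
      by_contra hne
      push_neg at hne
      obtain ⟨e0, he0, hne0⟩ := hne
      have hc0 : (D0 e0).card < d := lt_of_le_of_ne (hV0.1 e0 he0).2 hne0
      set R : Finset (Finset V) := E.filter
        (fun e => ∃ D', Relation.ReflTransGen (OrientAux.hStep E) (D0, e0) (D', e)) with hRdef
      have hRE : R ⊆ E := Finset.filter_subset _ _
      have he0R : e0 ∈ R := Finset.mem_filter.mpr ⟨he0, D0, Relation.ReflTransGen.refl⟩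
      have hkey : ∀ v : V,
          min b ((R.filter fun e => v ∈ e).card) ≤ (R.filter fun e => v ∈ D0 e).card := by
        intro v
        by_cases hcase : ∃ a ∈ R, v ∈ a ∧ v ∉ D0 a
        · obtain ⟨a, haR, hva, hvD0⟩ := hcase
          obtain ⟨haE, D, hreach⟩ := Finset.mem_filter.mp haR
          have hexp : OrientAux.hExposed E D0 e0 v := by
            by_cases hmem : v ∈ D a
            · exact ((OrientAux.hReach_inv hV0 he0 hc0 (D, a) hreach).2.2.2.2.2) a v hmem hvD0
            · exact ⟨(D, a), hreach, hva, hmem⟩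
          have hloadb : OrientAux.hload E D0 v = b :=
            OrientAux.exposed_load hV0 he0 hc0 hmax hexp
          have hfe : (R.filter fun e => v ∈ D0 e) = (E.filter fun e => v ∈ D0 e) := by
            apply Finset.Subset.antisymm (Finset.filter_subset_filter _ hRE)
            intro e' he'
            obtain ⟨he'E, hv'⟩ := Finset.mem_filter.mp he'
            exact Finset.mem_filter.mpr ⟨Finset.mem_filter.mpr
              ⟨he'E, OrientAux.exposed_closure hV0 he0 hc0 hexp e' he'E hv'⟩, hv'⟩
          have hcb : (E.filter fun e => v ∈ D0 e).card = b := hloadb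
          rw [hfe, hcb]
          exact min_le_left _ _
        · push_neg at hcase
          refine le_trans (min_le_right _ _) (Finset.card_le_card ?_)
          intro e he
          obtain ⟨heR, hve⟩ := Finset.mem_filter.mp he
          exact Finset.mem_filter.mpr ⟨heR, hcase e heR hve⟩
      have hlt : ∑ e ∈ R, (D0 e).card < d * R.card := by
        calc ∑ e ∈ R, (D0 e).card < ∑ _e ∈ R, d :=
              Finset.sum_lt_sum (fun e he => (hV0.1 e (hRE he)).2) ⟨e0, he0R, hc0⟩
          _ = d * R.card := by rw [Finset.sum_const, smul_eq_mul, mul_comm]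
      have hdouble : ∑ v : V, (R.filter fun e => v ∈ D0 e).card = ∑ e ∈ R, (D0 e).card :=
        (OrientAux.total_eq R D0).symm
      have hc1 := hcap R hRE
      have h2 : ∑ v : V, min b ((R.filter fun e => v ∈ e).card) ≤ ∑ e ∈ R, (D0 e).card := by
        rw [← hdouble]
        exact Finset.sum_le_sum (fun v _ => hkey v)
      omega
    exact ⟨D0, fun e he => ⟨(hV0.1 e he).1, hfull e he⟩, hV0.2⟩
end

section
/- Let k ≥ 2 be an integer. A finite k-uniform hypergraph (V,E) admits a (k−1,1)-orientation if and only if for every subset E' ⊆ E, the number of vertices belonging to at least one edge of E' is at least (k−1)·|E'|. -/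
open scoped Classical

/-- A finite `k`-uniform hypergraph `(V, E)` admits a `(k-1,1)`-orientation
iff for every `E' ⊆ E`, the number of vertices covered by `E'` is at least `(k-1)·|E'|`. -/
theorem orientation_iff_vertex_count {V : Type*} [Fintype V] [DecidableEq V]
    (k : ℕ) (hk : 2 ≤ k)
    (E : Finset (Finset V)) (hE : ∀ e ∈ E, e.card = k) :
    (∃ D : Finset V → Finset V,
        (∀ e ∈ E, D e ⊆ e ∧ (D e).card = k - 1) ∧
        (∀ v : V, (E.filter fun e => v ∈ D e).card ≤ 1))
      ↔ ∀ E' ⊆ E, (k - 1) * E'.card ≤ (E'.biUnion id).card := by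
  constructor
  · rintro ⟨D, hD, hb⟩ E' hE'
    have hdisj : ∀ e ∈ E', ∀ e' ∈ E', e ≠ e' → Disjoint (D e) (D e') := by
      intro e he e' he' hne
      rw [Finset.disjoint_left]
      intro v hv hv'
      have h2 : ({e, e'} : Finset (Finset V)) ⊆ E.filter fun x => v ∈ D x := by
        intro x hx
        simp only [Finset.mem_insert, Finset.mem_singleton] at hx
        rcases hx with rfl | rfl <;>
          simp [Finset.mem_filter, hE' he, hE' he', hv, hv']
      have hcard := Finset.card_le_card h2
      rw [Finset.card_insert_of_notMem (by simpa using hne),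
        Finset.card_singleton] at hcard
      have := hb v
      omega
    calc (k - 1) * E'.card = ∑ e ∈ E', (D e).card := by
          rw [Finset.sum_congr rfl (fun e he => (hD e (hE' he)).2),
            Finset.sum_const, smul_eq_mul, mul_comm]
      _ = (E'.biUnion D).card := (Finset.card_biUnion hdisj).symm
      _ ≤ (E'.biUnion id).card := by
          apply Finset.card_le_card
          apply Finset.biUnion_subset.2
          intro e he
          exact ((hD e (hE' he)).1).trans (Finset.subset_biUnion_of_mem id he)
  · intro hcond
    have hall : ∀ s : Finset ({e // e ∈ E} × Fin (k - 1)),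
        s.card ≤ (s.biUnion (fun p => (p.1 : Finset V))).card := by
      intro s
      set E' : Finset (Finset V) := s.image (fun p => (p.1 : Finset V)) with hE'def
      have hsubE : E' ⊆ E := by
        intro x hx
        simp only [hE'def, Finset.mem_image] at hx
        obtain ⟨p, _, rfl⟩ := hx
        exact p.1.2
      have hbiu : s.biUnion (fun p : {e // e ∈ E} × Fin (k - 1) => (p.1 : Finset V))
          = E'.biUnion id := by
        ext v
        simp only [Finset.mem_biUnion, hE'def, Finset.mem_image, id]
        constructor
        · rintro ⟨p, hp, hv⟩
          exact ⟨(p.1 : Finset V), ⟨p, hp, rfl⟩, hv⟩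
        · rintro ⟨x, ⟨p, hp, rfl⟩, hv⟩
          exact ⟨p, hp, hv⟩
      have hcard1 : s.card ≤ (k - 1) * E'.card := by
        have hsub : s ⊆ (s.image Prod.fst) ×ˢ (Finset.univ : Finset (Fin (k - 1))) := by
          intro p hp
          simp only [Finset.mem_product, Finset.mem_image, Finset.mem_univ, and_true]
          exact ⟨p, hp, rfl⟩
        have h1 := Finset.card_le_card hsub
        rw [Finset.card_product, Finset.card_univ, Fintype.card_fin] at h1
        have h2 : E' = Finset.image Subtype.val (s.image Prod.fst) := by
          ext x
          simp [hE'def]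
        rw [h2, Finset.card_image_of_injective _ Subtype.val_injective, mul_comm]
        exact h1
      calc s.card ≤ (k - 1) * E'.card := hcard1
        _ ≤ (E'.biUnion id).card := hcond E' hsubE
        _ = _ := by rw [hbiu]
    obtain ⟨f, hfinj, hfmem⟩ :=
      (Finset.all_card_le_biUnion_card_iff_exists_injective
        (fun p : {e // e ∈ E} × Fin (k - 1) => (p.1 : Finset V))).mp hall
    refine ⟨fun e => if h : e ∈ E then
          Finset.image (fun i => f (⟨e, h⟩, i)) Finset.univ else ∅, ?_, ?_⟩
    · intro e he
      simp only [dif_pos he]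
      constructor
      · intro v hv
        simp only [Finset.mem_image, Finset.mem_univ, true_and] at hv
        obtain ⟨i, rfl⟩ := hv
        exact hfmem _
      · rw [Finset.card_image_of_injective _ (fun i j hij => by
          simpa using congrArg Prod.snd (hfinj hij))]
        simp
    · intro v
      rw [Finset.card_le_one]
      intro e he e' he'
      simp only [Finset.mem_filter] at he he'
      obtain ⟨heE, hv⟩ := he
      obtain ⟨heE', hv'⟩ := he'
      simp only [dif_pos heE] at hv
      simp only [dif_pos heE'] at hv'
      simp only [Finset.mem_image, Finset.mem_univ, true_and] at hv hv'
      obtain ⟨i, hi⟩ := hv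
      obtain ⟨i', hi'⟩ := hv'
      have := hfinj (hi.trans hi'.symm)
      exact congrArg (fun p => ((p.1 : {e // e ∈ E}) : Finset V)) this
end

section
/- Let k ≥ 2 be an integer and let (V,E) be a finite k-uniform hypergraph in which every connected component C satisfies (k−1)·e(C) ≤ v(C), where e(C) and v(C) denote the numbers of edges and vertices of C. Then (V,E) admits a (k−1,1)-orientation. In particular, a hypergraph all of whose components are hypertrees or unicyclic is (k−1,1)-orientable. -/
open scoped Classical

/-- Two vertices touch if some hyperedge of `E` contains both. -/
def Touches {V : Type*} (E : Finset (Finset V)) (v w : V) : Prop :=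
  ∃ e ∈ E, v ∈ e ∧ w ∈ e

/-- The connected component of a vertex `v`: all vertices joined to `v` by a sequence of
hyperedges in which consecutive hyperedges share a vertex. -/
def component {V : Type*} (E : Finset (Finset V)) (v : V) : Set V :=
  {w | Relation.ReflTransGen (Touches E) v w}

/-- The edges of `E` belonging to the component `C` (those touching `C`). -/
noncomputable def componentEdges {V : Type*} (E : Finset (Finset V)) (C : Set V) : Finset (Finset V) :=
  E.filter fun e => ∃ w ∈ e, w ∈ C

/-!
By Hall's theorem applied to `k - 1` copies of every edge, it suffices that
`(k - 1) * #S ≤ #(⋃ S)` for every set `S` of edges. Both sides are additive over components, so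
let `S` be a nonempty set of edges of one component `C` with edge set `F`. Since `C` is
connected, the edges of `F \ S` can be added to `S` one at a time, each meeting the union of the
previous ones and hence contributing at most `k - 1` new vertices. Thus
`#C ≤ #(⋃ S) + (k - 1) * #(F \ S)`, and `(k - 1) * #F ≤ #C` gives the claim.
-/

section Expansion

variable {α : Type*} [DecidableEq α]

theorem card_biUnion_le_card_biUnion_add {k : ℕ} {F S : Finset (Finset α)}
    (hF : ∀ e ∈ F, e.card = k) (hSF : S ⊆ F)
    (hgrow : ∀ T, S ⊆ T → T ⊂ F → ∃ e ∈ F \ T, ¬Disjoint e (T.biUnion id)) :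
    (F.biUnion id).card ≤ (S.biUnion id).card + (k - 1) * (F \ S).card := by
  induction hn : (F \ S).card generalizing S with
  | zero => simp [Finset.sdiff_eq_empty_iff_subset.1 (Finset.card_eq_zero.1 hn) |>.antisymm hSF]
  | succ n ih =>
    have hSF' : S ⊂ F := hSF.ssubset_of_ne (by rintro rfl; simp at hn)
    obtain ⟨e, he, hmeet⟩ := hgrow S subset_rfl hSF'
    obtain ⟨heF, heS⟩ := Finset.mem_sdiff.1 he
    have hstep : ((insert e S).biUnion id).card ≤ (S.biUnion id).card + (k - 1) := by
      have hinter : 0 < (e ∩ S.biUnion id).card :=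
        Finset.card_pos.2 (Finset.not_disjoint_iff_nonempty_inter.1 hmeet)
      have := Finset.card_union_add_card_inter e (S.biUnion id)
      rw [Finset.biUnion_insert, id, ← hF e heF]
      omega
    have hrest : (F \ insert e S).card = n := by
      rw [Finset.sdiff_insert, Finset.card_erase_of_mem he, hn, Nat.add_sub_cancel]
    have := ih (Finset.insert_subset heF hSF)
      (fun T hT => hgrow T ((Finset.subset_insert e S).trans hT)) hrest
    calc (F.biUnion id).card ≤ ((insert e S).biUnion id).card + (k - 1) * n := this
      _ ≤ (S.biUnion id).card + (k - 1) * (n + 1) := by rw [mul_add_one]; omega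

end Expansion

section Hall

variable {ι α : Type*} [DecidableEq α]

theorem exists_pairwiseDisjoint_subsets_of_mul_card_le {d : ℕ} {E : Finset ι}
    {t : ι → Finset α} (h : ∀ S ⊆ E, d * S.card ≤ (S.biUnion t).card) :
    ∃ D : ι → Finset α,
      (∀ i ∈ E, D i ⊆ t i ∧ (D i).card = d) ∧ (E : Set ι).PairwiseDisjoint D := by
  -- Hall's condition for `d` copies of each `t i`
  have hall (s : Finset (E × Fin d)) : s.card ≤ (s.biUnion fun p => t p.1).card := by
    have hfiber : ∀ i ∈ s.image (·.1), (s.filter (·.1 = i)).card ≤ d := fun i _ =>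
      (Finset.card_le_card_of_injOn Prod.snd (fun _ _ => Finset.mem_coe.2 (Finset.mem_univ _))
        fun p hp q hq hpq => Prod.ext ((Finset.mem_filter.1 hp).2.trans
          (Finset.mem_filter.1 hq).2.symm) hpq).trans_eq (Finset.card_fin d)
    calc s.card ≤ d * (s.image (·.1)).card := Finset.card_le_mul_card_image _ _ hfiber
      _ = d * ((s.image (·.1)).map (Function.Embedding.subtype (· ∈ E))).card := by
        rw [Finset.card_map]
      _ ≤ (((s.image (·.1)).map (Function.Embedding.subtype (· ∈ E))).biUnion t).card :=
        h _ fun i hi => by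
          obtain ⟨j, -, rfl⟩ := Finset.mem_map.1 hi
          exact j.2
      _ = (s.biUnion fun p => t p.1).card := by
        rw [Finset.map_eq_image, Finset.image_image, Finset.image_biUnion]
        rfl
  obtain ⟨f, hf, hft⟩ := (Finset.all_card_le_biUnion_card_iff_exists_injective _).1 hall
  refine ⟨fun i => if hi : i ∈ E then Finset.univ.image fun j => f (⟨i, hi⟩, j) else ∅,
    fun i hi => ?_, fun i hi i' hi' hii' => ?_⟩
  · simp only [dif_pos hi]
    refine ⟨fun x hx => ?_, ?_⟩
    · obtain ⟨j, -, rfl⟩ := Finset.mem_image.1 hx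
      exact hft _
    · rw [Finset.card_image_of_injective _ fun j j' hjj' => (Prod.ext_iff.1 (hf hjj')).2,
        Finset.card_univ, Fintype.card_fin]
  · simp only [Function.onFun, dif_pos (Finset.mem_coe.1 hi), dif_pos (Finset.mem_coe.1 hi')]
    refine Finset.disjoint_left.2 fun x hx hx' => hii' ?_
    obtain ⟨j, -, rfl⟩ := Finset.mem_image.1 hx
    obtain ⟨j', -, hjj'⟩ := Finset.mem_image.1 hx'
    exact congrArg Subtype.val (Prod.ext_iff.1 (hf hjj')).1.symm

end Hall

section Component

variable {V : Type*} {E : Finset (Finset V)}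

instance Touches.instSymm (E : Finset (Finset V)) : Std.Symm (Touches E) :=
  ⟨fun _ _ ⟨e, he, hv, hw⟩ => ⟨e, he, hw, hv⟩⟩

theorem mem_componentEdges {C : Set V} {f : Finset V} :
    f ∈ componentEdges E C ↔ f ∈ E ∧ ∃ w ∈ f, w ∈ C := by
  simp [componentEdges]

theorem mem_component_of_mem_componentEdges {v x : V} {f : Finset V}
    (hf : f ∈ componentEdges E (component E v)) (hx : x ∈ f) : x ∈ component E v := by
  obtain ⟨hfE, w, hwf, hw⟩ := mem_componentEdges.1 hf
  exact Relation.ReflTransGen.tail hw ⟨f, hfE, hwf, hx⟩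

theorem component_subset_of_touches_closed {A : Set V}
    (hA : ∀ x ∈ A, ∀ w, Touches E x w → w ∈ A) {u v : V} (hu : u ∈ A)
    (huv : u ∈ component E v) : component E v ⊆ A := by
  intro w hvw
  have huw : Relation.ReflTransGen (Touches E) u w := (Std.Symm.symm _ _ huv).trans hvw
  clear hvw
  induction huw with
  | refl => exact hu
  | tail _ hxw ih => exact hA _ ih _ hxw

variable [DecidableEq V]

theorem component_eq_biUnion_componentEdges {v : V}
    (hF : (componentEdges E (component E v)).Nonempty) :
    component E v = ↑((componentEdges E (component E v)).biUnion id) := by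
  refine subset_antisymm ?_ fun x hx => ?_
  · obtain ⟨f, hf⟩ := hF
    obtain ⟨-, u, huf, hu⟩ := mem_componentEdges.1 hf
    refine component_subset_of_touches_closed (fun x hx w ⟨g, hgE, hxg, hwg⟩ => ?_)
      (Finset.mem_biUnion.2 ⟨f, hf, huf⟩) hu
    obtain ⟨g', hg', hxg'⟩ := Finset.mem_biUnion.1 hx
    exact Finset.mem_biUnion.2 ⟨g, mem_componentEdges.2
      ⟨hgE, x, hxg, mem_component_of_mem_componentEdges hg' hxg'⟩, hwg⟩
  · obtain ⟨f, hf, hxf⟩ := Finset.mem_biUnion.1 hx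
    exact mem_component_of_mem_componentEdges hf hxf

theorem exists_mem_componentEdges_sdiff_not_disjoint {v : V} {T : Finset (Finset V)}
    (hTne : T.Nonempty) (hT : T ⊂ componentEdges E (component E v)) :
    ∃ e ∈ componentEdges E (component E v) \ T, ¬Disjoint e (T.biUnion id) := by
  by_contra! hsep
  obtain ⟨f, hfF, hfT⟩ := Finset.exists_of_ssubset hT
  obtain ⟨-, u, huf, hu⟩ := mem_componentEdges.1 hfF
  obtain ⟨g, hgT⟩ := hTne
  obtain ⟨-, w, hwg, hw⟩ := mem_componentEdges.1 (hT.subset hgT)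
  have hclosed :
      ∀ x ∈ (T.biUnion id : Set V), ∀ y, Touches E x y → y ∈ (T.biUnion id : Set V) := by
    rintro x hx y ⟨h, hhE, hxh, hyh⟩
    obtain ⟨h', hh'T, hxh'⟩ := Finset.mem_biUnion.1 hx
    have hhF : h ∈ componentEdges E (component E v) := mem_componentEdges.2
      ⟨hhE, x, hxh, mem_component_of_mem_componentEdges (hT.subset hh'T) hxh'⟩
    by_cases hhT : h ∈ T
    · exact Finset.mem_biUnion.2 ⟨h, hhT, hyh⟩
    · exact absurd hx (Finset.disjoint_left.1 (hsep h (Finset.mem_sdiff.2 ⟨hhF, hhT⟩)) hxh)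
  have huT : u ∈ T.biUnion id :=
    component_subset_of_touches_closed hclosed (Finset.mem_biUnion.2 ⟨g, hgT, hwg⟩) hw hu
  exact Finset.disjoint_left.1 (hsep f (Finset.mem_sdiff.2 ⟨hfF, hfT⟩)) huf huT

end Component

section HallCondition

variable {V : Type*} [DecidableEq V] {k : ℕ} {E : Finset (Finset V)}

theorem card_mul_le_card_biUnion_of_subset_componentEdges (hE : ∀ e ∈ E, e.card = k) {v : V}
    (hv : (k - 1) * (componentEdges E (component E v)).card ≤ (component E v).ncard)
    {S : Finset (Finset V)} (hS : S ⊆ componentEdges E (component E v)) :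
    (k - 1) * S.card ≤ (S.biUnion id).card := by
  obtain rfl | hSne := S.eq_empty_or_nonempty
  · simp
  have hexpand := card_biUnion_le_card_biUnion_add
    (fun e he => hE e (mem_componentEdges.1 he).1) hS
    (fun T hST hTF => exists_mem_componentEdges_sdiff_not_disjoint (hSne.mono hST) hTF)
  have hC : (component E v).ncard = ((componentEdges E (component E v)).biUnion id).card := by
    nth_rw 1 [component_eq_biUnion_componentEdges (hSne.mono hS)]
    exact Set.ncard_coe_finset _
  rw [hC, ← Finset.card_sdiff_add_card_eq_card hS, mul_add] at hv
  omega

theorem disjoint_biUnion_of_subset_componentEdges {v : V} {S T : Finset (Finset V)}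
    (hS : S ⊆ componentEdges E (component E v)) (hT : T ⊆ E)
    (hTv : ∀ f ∈ T, f ∉ componentEdges E (component E v)) :
    Disjoint (S.biUnion id) (T.biUnion id) := by
  refine Finset.disjoint_left.2 fun x hxS hxT => ?_
  obtain ⟨f, hfS, hxf⟩ := Finset.mem_biUnion.1 hxS
  obtain ⟨g, hgT, hxg⟩ := Finset.mem_biUnion.1 hxT
  exact hTv g hgT (mem_componentEdges.2
    ⟨hT hgT, x, hxg, mem_component_of_mem_componentEdges (hS hfS) hxf⟩)

theorem card_mul_le_card_biUnion (hE : ∀ e ∈ E, e.card = k)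
    (hexcess : ∀ v : V,
      (k - 1) * (componentEdges E (component E v)).card ≤ (component E v).ncard)
    {S : Finset (Finset V)} (hSE : S ⊆ E) : (k - 1) * S.card ≤ (S.biUnion id).card := by
  induction S using Finset.strongInduction with
  | H S ih =>
  obtain hk | hk := Nat.eq_zero_or_pos (k - 1)
  · simp [hk]
  obtain rfl | ⟨e, he⟩ := S.eq_empty_or_nonempty
  · simp
  obtain ⟨u, hu⟩ : e.Nonempty := Finset.card_pos.1 (by rw [hE e (hSE he)]; omega)
  set F := componentEdges E (component E u)
  have heF : e ∈ F := mem_componentEdges.2 ⟨hSE he, u, hu, Relation.ReflTransGen.refl⟩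
  have hin := card_mul_le_card_biUnion_of_subset_componentEdges hE (hexcess u)
    (S := S.filter (· ∈ F)) fun f hf => (Finset.mem_filter.1 hf).2
  have hout := ih (S.filter (· ∉ F)) (Finset.filter_ssubset.2 ⟨e, he, not_not.2 heF⟩)
    ((S.filter_subset _).trans hSE)
  have hdisj := disjoint_biUnion_of_subset_componentEdges (S := S.filter (· ∈ F))
    (fun f hf => (Finset.mem_filter.1 hf).2) ((S.filter_subset _).trans hSE)
    fun f hf => (Finset.mem_filter.1 hf).2
  calc (k - 1) * S.card
      = (k - 1) * (S.filter (· ∈ F)).card + (k - 1) * (S.filter (· ∉ F)).card := by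
        rw [← mul_add, Finset.card_filter_add_card_filter_not]
    _ ≤ ((S.filter (· ∈ F)).biUnion id).card + ((S.filter (· ∉ F)).biUnion id).card :=
        add_le_add hin hout
    _ = (S.biUnion id).card := by
        rw [← Finset.card_union_of_disjoint hdisj, ← Finset.union_biUnion,
          Finset.filter_union_filter_not_eq]

end HallCondition

theorem orientable_of_small_excess_general {V : Type*} [DecidableEq V]
    (k : ℕ)
    (E : Finset (Finset V)) (hE : ∀ e ∈ E, e.card = k)
    (hexcess : ∀ v : V,
      (k - 1) * (componentEdges E (component E v)).card ≤ (component E v).ncard) :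
    ∃ D : Finset V → Finset V,
      (∀ e ∈ E, D e ⊆ e ∧ (D e).card = k - 1) ∧
      (∀ v : V, (E.filter fun e => v ∈ D e).card ≤ 1) := by
  obtain ⟨D, hD, hdisj⟩ := exists_pairwiseDisjoint_subsets_of_mul_card_le (t := id)
    fun S hS => card_mul_le_card_biUnion hE hexcess hS
  refine ⟨D, hD, fun v => Finset.card_le_one.2 fun e he e' he' => ?_⟩
  rw [Finset.mem_filter] at he he'
  by_contra hne
  exact Finset.disjoint_left.1 (hdisj he.1 he'.1 hne) he.2 he'.2

/-- If every connected component `C` of a finite `k`-uniform hypergraph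
satisfies `(k-1)·e(C) ≤ v(C)`, then the hypergraph admits a `(k-1,1)`-orientation. -/
theorem orientable_of_small_excess {V : Type*} [Fintype V] [DecidableEq V]
    (k : ℕ) (hk : 2 ≤ k)
    (E : Finset (Finset V)) (hE : ∀ e ∈ E, e.card = k)
    (hexcess : ∀ v : V,
      (k - 1) * (componentEdges E (component E v)).card ≤ (component E v).ncard) :
    ∃ D : Finset V → Finset V,
      (∀ e ∈ E, D e ⊆ e ∧ (D e).card = k - 1) ∧
      (∀ v : V, (E.filter fun e => v ∈ D e).card ≤ 1) :=
  orientable_of_small_excess_general k E hE hexcess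
end

section
/- Let 0 < ε < 1/2, let k ≥ 2 be an integer, and let n be an integer with n/log n > 100k²/ε². Let p = (1 − 0.8ε)·(k−2)!/n^{k−1} and let X be a binomial random variable with C(n,k) trials and success probability p. Then P(X < (1−ε)·n/(k(k−1))) ≤ n^{−1.07}. -/
/-!
Chernoff's bound with parameter `s = ε/5`, together with `exp (-s) ≤ 1 - s + s²/2`, bounds
`P(X < (1 - ε) A)`, where `A = n/(k(k-1))`, by `exp (s (1 - ε) A - E X (s - s²/2))`.
By Bernoulli's inequality `k! C(n,k) ≥ (n + 1 - k)^k ≥ n^k (1 - k(k-1)/n)`, and the hypothesis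
on `n` gives `k(k-1)/n ≤ ε/100` and `ε² A ≥ 100 log n`; hence `E X ≥ (1 - 0.8ε)(1 - ε/100) A`
and the exponent is at most `-0.018 ε² A ≤ -1.8 log n`.
-/

open Finset Real
open scoped Nat

noncomputable def binomialLowerTail (N : ℕ) (p t : ℝ) : ℝ :=
  ∑ j ∈ range (N + 1), if (j : ℝ) < t then (N.choose j : ℝ) * p ^ j * (1 - p) ^ (N - j) else 0

section Chernoff

variable {N : ℕ} {p s : ℝ}

lemma binomialLowerTail_le_exp_mul_pow (hp₀ : 0 ≤ p) (hp₁ : p ≤ 1) (hs : 0 ≤ s) (t : ℝ) :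
    binomialLowerTail N p t ≤ exp (s * t) * (p * exp (-s) + (1 - p)) ^ N := by
  have hq : 0 ≤ 1 - p := by linarith
  rw [add_pow, mul_sum, binomialLowerTail]
  refine sum_le_sum fun j _ => ?_
  split_ifs with hj
  · calc (N.choose j : ℝ) * p ^ j * (1 - p) ^ (N - j)
        ≤ exp (s * (t - j)) * ((N.choose j : ℝ) * p ^ j * (1 - p) ^ (N - j)) :=
          le_mul_of_one_le_left (by positivity) (one_le_exp (by nlinarith))
      _ = _ := by
        rw [mul_pow, ← exp_nat_mul, mul_sub, sub_eq_add_neg, exp_add]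
        ring_nf
  · positivity

lemma binomialLowerTail_le_exp (hp₀ : 0 ≤ p) (hp₁ : p ≤ 1) (hs : 0 ≤ s) (t : ℝ) :
    binomialLowerTail N p t ≤ exp (s * t + N * p * (exp (-s) - 1)) :=
  calc binomialLowerTail N p t ≤ exp (s * t) * (p * exp (-s) + (1 - p)) ^ N :=
        binomialLowerTail_le_exp_mul_pow hp₀ hp₁ hs t
    _ ≤ exp (s * t) * exp (p * (exp (-s) - 1)) ^ N := by
        have := add_one_le_exp (p * (exp (-s) - 1))
        gcongr
        linarith
    _ = exp (s * t + N * p * (exp (-s) - 1)) := by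
        rw [← exp_nat_mul, ← exp_add, mul_assoc]

lemma exp_neg_le_one_sub_add_sq_div_two (hs : 0 ≤ s) : exp (-s) ≤ 1 - s + s ^ 2 / 2 := by
  let f : ℝ → ℝ := fun x => 1 - x + x ^ 2 / 2 - exp (-x)
  have hderiv (x : ℝ) : HasDerivAt f (-1 + x + exp (-x)) x := by
    refine ((((hasDerivAt_id' x).const_sub 1).add ((hasDerivAt_pow 2 x).div_const 2)).sub
      (hasDerivAt_neg' x).exp).congr_deriv ?_
    push_cast
    ring
  have hmono : Monotone f := monotone_of_deriv_nonneg (fun x => (hderiv x).differentiableAt)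
    fun x => (hderiv x).deriv ▸ by linarith [add_one_le_exp (-x)]
  have := hmono hs
  norm_num [f] at this
  linarith

lemma binomialLowerTail_le_exp_sub_mul (hp₀ : 0 ≤ p) (hp₁ : p ≤ 1) (hs : 0 ≤ s) (t : ℝ) :
    binomialLowerTail N p t ≤ exp (s * t - N * p * (s - s ^ 2 / 2)) := by
  refine (binomialLowerTail_le_exp hp₀ hp₁ hs t).trans (exp_le_exp.2 ?_)
  have hmean : 0 ≤ (N : ℝ) * p := by positivity
  nlinarith [exp_neg_le_one_sub_add_sq_div_two hs]

end Chernoff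

lemma pow_mul_one_sub_le_descFactorial {n k : ℕ} (hn : 0 < n) (hk : k ≤ n + 1) :
    (n : ℝ) ^ k * (1 - k * (k - 1) / n) ≤ n.descFactorial k := by
  have hn' : (0 : ℝ) < n := by exact_mod_cast hn
  have hk' : (k : ℝ) - 1 ≤ n := by
    have : (k : ℝ) ≤ n + 1 := by exact_mod_cast hk
    linarith
  calc (n : ℝ) ^ k * (1 - k * (k - 1) / n)
      = (n : ℝ) ^ k * (1 + k * (-((k - 1) / n))) := by ring
    _ ≤ (n : ℝ) ^ k * (1 + -((k - 1) / n)) ^ k := by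
        gcongr
        refine one_add_mul_le_pow ?_ k
        have : ((k : ℝ) - 1) / n ≤ 1 := (div_le_one hn').2 hk'
        linarith
    _ = ((n + 1 - k : ℕ) : ℝ) ^ k := by
        rw [← mul_pow, Nat.cast_sub hk]
        field_simp
        push_cast
        ring
    _ ≤ n.descFactorial k := by exact_mod_cast Nat.pow_sub_le_descFactorial n k

section FactorialBounds

variable {n k : ℕ} {c : ℝ}

lemma mul_one_sub_mul_div_le_choose_mul (hc : 0 ≤ c) (hk : 2 ≤ k) (hkn : k ≤ n) :
    c * ((1 - k * (k - 1) / n) * (n / (k * (k - 1)))) ≤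
      n.choose k * (c * (k - 2)! / (n : ℝ) ^ (k - 1)) := by
  obtain ⟨m, rfl⟩ : ∃ m, k = m + 2 := ⟨k - 2, by omega⟩
  have hn : 0 < n := by omega
  have hdesc := pow_mul_one_sub_le_descFactorial hn (k := m + 2) (by omega)
  rw [Nat.descFactorial_eq_factorial_mul_choose, Nat.factorial_succ, Nat.factorial_succ] at hdesc
  rw [show m + 2 - 2 = m by omega, show m + 2 - 1 = m + 1 by omega]
  push_cast at hdesc ⊢
  rw [show (m : ℝ) + 2 - 1 = m + 1 by ring] at hdesc ⊢
  have hn' : (0 : ℝ) < n := by exact_mod_cast hn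
  calc c * ((1 - (m + 2) * (m + 1) / n) * (n / ((m + 2) * (m + 1))))
      = c * ((n : ℝ) ^ (m + 2) * (1 - (m + 2) * (m + 1) / n) / ((m + 2) * (m + 1)) /
          (n : ℝ) ^ (m + 1)) := by
        field_simp
        ring
    _ ≤ c * ((m + 1 + 1) * ((m + 1) * m !) * n.choose (m + 2) / ((m + 2) * (m + 1)) /
          (n : ℝ) ^ (m + 1)) := by gcongr
    _ = n.choose (m + 2) * (c * m ! / (n : ℝ) ^ (m + 1)) := by
        field_simp
        ring

lemma mul_factorial_div_pow_mem_Icc (hc₀ : 0 ≤ c) (hc₁ : c ≤ 1) (hk : 2 ≤ k) (hkn : k ≤ n) :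
    c * (k - 2)! / (n : ℝ) ^ (k - 1) ∈ Set.Icc 0 1 := by
  have hfact : ((k - 2)! : ℝ) ≤ (n : ℝ) ^ (k - 1) := by
    exact_mod_cast (Nat.factorial_le_pow (k - 2)).trans
      ((Nat.pow_le_pow_left (by omega) _).trans (Nat.pow_le_pow_right (by omega) (by omega)))
  have hpow : (0 : ℝ) < (n : ℝ) ^ (k - 1) := pow_pos (by exact_mod_cast (by omega : 0 < n)) _
  refine ⟨by positivity, (div_le_one hpow).2 ?_⟩
  nlinarith [(k - 2)!.cast_nonneg (α := ℝ)]

end FactorialBounds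

lemma chernoff_exponent_le {ε A L μ : ℝ} (hε₀ : 0 < ε) (hε : ε < 1 / 2) (hL : 0 ≤ L)
    (hA : 100 * L ≤ ε ^ 2 * A) (hμ : (1 - 0.8 * ε) * (1 - ε / 100) * A ≤ μ) :
    ε / 5 * ((1 - ε) * A) - μ * (ε / 5 - (ε / 5) ^ 2 / 2) ≤ -1.07 * L := by
  have hA₀ : 0 ≤ A := nonneg_of_mul_nonneg_right (by linarith) (by positivity : 0 < ε ^ 2)
  have hμ' := mul_le_mul_of_nonneg_right hμ (by nlinarith : 0 ≤ ε / 5 - (ε / 5) ^ 2 / 2)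
  have hprod : 1 - 0.91 * ε ≤ (1 - 0.8 * ε) * (1 - ε / 100) * (1 - ε / 10) := by nlinarith
  have := mul_le_mul_of_nonneg_left hprod (by positivity : 0 ≤ ε / 5 * A)
  nlinarith

lemma chernoff_exponent_le_of_sq_mul_log_lt {ε L μ : ℝ} {k n : ℕ} (hε₀ : 0 < ε)
    (hε : ε < 1 / 2) (hk : 2 ≤ k) (hL : 1 / 2 < L) (hkey : 100 * k ^ 2 * L < ε ^ 2 * n)
    (hμ : (1 - 0.8 * ε) * ((1 - k * (k - 1) / n) * (n / (k * (k - 1)))) ≤ μ) :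
    ε / 5 * ((1 - ε) * (n / (k * (k - 1)))) - μ * (ε / 5 - (ε / 5) ^ 2 / 2) ≤ -1.07 * L := by
  have hk' : (2 : ℝ) ≤ k := by exact_mod_cast hk
  have hkk : (0 : ℝ) < k * (k - 1) := by nlinarith
  have hn : (0 : ℝ) < n := by nlinarith
  refine chernoff_exponent_le hε₀ hε (by linarith) ?_ (le_trans ?_ hμ)
  · rw [mul_div_assoc', le_div_iff₀ hkk]
    nlinarith [mul_le_mul_of_nonneg_left (by linarith : (k : ℝ) - 1 ≤ k)
      (by positivity : (0 : ℝ) ≤ 100 * k * L)]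
  · have hδ : (k : ℝ) * (k - 1) / n ≤ ε / 100 := by
      rw [div_le_iff₀ hn]
      nlinarith
    rw [mul_assoc]
    gcongr
    linarith

lemma half_lt_log_and_mul_log_lt {a b : ℝ} {n : ℕ} (ha : 0 ≤ a) (hb : 0 < b)
    (h : a / b < n / log n) : 1 / 2 < log n ∧ a * log n < b * n := by
  have hlog : 0 < log n := by
    by_contra! hlog
    linarith [div_nonpos_of_nonneg_of_nonpos n.cast_nonneg hlog, div_nonneg ha hb.le]
  have hn : (2 : ℝ) ≤ n := by
    have : 1 < n := by exact_mod_cast (log_pos_iff n.cast_nonneg).1 hlog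
    exact_mod_cast this
  rw [div_lt_div_iff₀ hb hlog] at h
  exact ⟨by linarith [log_two_gt_d9, log_le_log two_pos hn], by linarith⟩

/-- For `0 < ε < 1/2`, `k ≥ 2`, `n/log n > 100k²/ε²`, and
`p = (1 - 0.8ε)·(k-2)!/n^{k-1}`, a binomial random variable `X` with `C(n,k)` trials and
success probability `p` satisfies `P(X < (1-ε)·n/(k(k-1))) ≤ n^{-1.07}`.
The left-hand side is written out as the binomial tail
`Σ_{j : (j:ℝ) < (1-ε)n/(k(k-1))} C(C(n,k), j) p^j (1-p)^{C(n,k)-j}`. -/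
theorem binomial_lower_tail (ε : ℝ) (hε0 : 0 < ε) (hε : ε < 1 / 2)
    (k : ℕ) (hk : 2 ≤ k) (n : ℕ)
    (hn : (100 : ℝ) * k ^ 2 / ε ^ 2 < (n : ℝ) / Real.log n) :
    (∑ j ∈ Finset.range (Nat.choose n k + 1),
        if (j : ℝ) < (1 - ε) * n / ((k : ℝ) * ((k : ℝ) - 1)) then
          ((Nat.choose n k).choose j : ℝ) *
            ((1 - 0.8 * ε) * (Nat.factorial (k - 2)) / (n : ℝ) ^ (k - 1)) ^ j *
            (1 - (1 - 0.8 * ε) * (Nat.factorial (k - 2)) / (n : ℝ) ^ (k - 1)) ^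
              (Nat.choose n k - j)
        else 0)
      ≤ (n : ℝ) ^ (-(1.07 : ℝ)) := by
  set p : ℝ := (1 - 0.8 * ε) * (k - 2)! / (n : ℝ) ^ (k - 1)
  obtain ⟨hlog, hkey⟩ := half_lt_log_and_mul_log_lt (by positivity) (by positivity) hn
  have hkn : k ≤ n := by
    have hk' : (2 : ℝ) ≤ k := by exact_mod_cast hk
    have h₁ : 50 * (k : ℝ) ^ 2 < ε ^ 2 * n := by nlinarith
    have h₂ : ε ^ 2 * n ≤ n := mul_le_of_le_one_left n.cast_nonneg (by nlinarith)
    have : (k : ℝ) ≤ n := by nlinarith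
    exact_mod_cast this
  obtain ⟨hp₀, hp₁⟩ :=
    mul_factorial_div_pow_mem_Icc (c := 1 - 0.8 * ε) (by linarith) (by linarith) hk hkn
  calc _ = binomialLowerTail (n.choose k) p ((1 - ε) * (n / (k * (k - 1)))) := by
        rw [binomialLowerTail, mul_div_assoc]
    _ ≤ exp (ε / 5 * ((1 - ε) * (n / (k * (k - 1)))) -
          n.choose k * p * (ε / 5 - (ε / 5) ^ 2 / 2)) :=
        binomialLowerTail_le_exp_sub_mul hp₀ hp₁ (by positivity) _
    _ ≤ exp (-1.07 * log n) :=
        exp_le_exp.2 (chernoff_exponent_le_of_sq_mul_log_lt hε0 hε hk hlog hkey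
          (mul_one_sub_mul_div_le_choose_mul (by linarith) hk hkn))
    _ = (n : ℝ) ^ (-(1.07 : ℝ)) := by
        rw [rpow_def_of_pos (by exact_mod_cast (by omega : 0 < n)), mul_comm]
end

section
/- Let 0 < ε < 1/2, let k ≥ 2 be an integer, and let n be an integer with n > 200k²/ε. Let p = (1 − 0.8ε)·(k−2)!/n^{k−1}. Then in the random hypergraph H_{n,p;k}, with probability at least 1 − 1/n, every connected component has at most (16k/ε²)·log n vertices. -/
open scoped Classical

/-- `H` is `k`-uniform: every hyperedge has exactly `k` vertices. -/
def IsUniform (k : ℕ) {n : ℕ} (H : Finset (Finset (Fin n))) : Prop :=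
  ∀ e ∈ H, e.card = k

/-- The probability of the event `A` under `H_{n,p;k}`, the random `k`-uniform hypergraph
on `{1,…,n}` in which each of the `C(n,k)` possible hyperedges appears independently with
probability `p`. -/
noncomputable def probHnp (n k : ℕ) (p : ℝ) (A : Finset (Finset (Fin n)) → Prop) : ℝ :=
  ∑ H : Finset (Finset (Fin n)),
    if IsUniform k H ∧ A H then p ^ H.card * (1 - p) ^ (Nat.choose n k - H.card) else 0

/-!
Explore the component of a vertex `v` breadth first, querying every potential hyperedge at most
once. The answers are independent, so the number of hyperedges found in `N` queries is dominated
by `Bin(N, p)`. On the other hand, a component with more than `s` vertices forces at least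
`s / (k - 1)` hyperedges to be found within `N = s (1 + C(n - 1, k - 1))` queries, since each
adds at most `k - 1` vertices. For `p = (1 - 0.8ε) (k - 2)! / n ^ (k - 1)` the mean `N p` is about
`(1 - 0.8ε) s / (k - 1)`, so the Chernoff bound with parameter `ε / 2` makes this event have
probability at most `1 / n²`; a union bound over the `n` vertices finishes the proof.
-/

noncomputable def RandomSubset.prob {α : Type*} (S : Finset α) (p : ℝ) (E : Finset α → Prop) :
    ℝ :=
  ∑ H ∈ S.powerset, if E H then p ^ H.card * (1 - p) ^ (S.card - H.card) else 0

namespace RandomSubset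

variable {α : Type*} {S : Finset α} {p : ℝ} {E F : Finset α → Prop}

theorem summand_nonneg (hp0 : 0 ≤ p) (hp1 : p ≤ 1) (P : Prop) (H : Finset α) :
    0 ≤ if P then p ^ H.card * (1 - p) ^ (S.card - H.card) else 0 :=
  ite_nonneg (mul_nonneg (pow_nonneg hp0 _) (pow_nonneg (sub_nonneg.2 hp1) _)) le_rfl

theorem prob_true : prob S p (fun _ => True) = 1 := by
  simp [prob, Finset.sum_pow_mul_eq_add_pow]

theorem prob_false : prob S p (fun _ => False) = 0 := by simp [prob]

theorem prob_congr (h : ∀ H ⊆ S, E H ↔ F H) : prob S p E = prob S p F :=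
  Finset.sum_congr rfl fun H hH => by rw [if_congr (h H (Finset.mem_powerset.1 hH)) rfl rfl]

theorem prob_mono (hp0 : 0 ≤ p) (hp1 : p ≤ 1) (h : ∀ H ⊆ S, E H → F H) :
    prob S p E ≤ prob S p F := by
  refine Finset.sum_le_sum fun H hH => ?_
  by_cases hE : E H
  · rw [if_pos hE, if_pos (h H (Finset.mem_powerset.1 hH) hE)]
  · rw [if_neg hE]
    exact summand_nonneg hp0 hp1 _ H

theorem prob_le_one (hp0 : 0 ≤ p) (hp1 : p ≤ 1) (E : Finset α → Prop) : prob S p E ≤ 1 :=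
  prob_true (S := S) (p := p) ▸ prob_mono hp0 hp1 fun _ _ _ => trivial

theorem prob_and_add_prob_and_not (C : Finset α → Prop) :
    prob S p (fun H => E H ∧ C H) + prob S p (fun H => E H ∧ ¬ C H) = prob S p E := by
  rw [prob, prob, prob, ← Finset.sum_add_distrib]
  refine Finset.sum_congr rfl fun H _ => ?_
  by_cases hE : E H <;> by_cases hC : C H <;> simp [hE, hC]

theorem prob_not : prob S p (fun H => ¬ E H) = 1 - prob S p E := by
  have h := prob_and_add_prob_and_not (S := S) (p := p) (E := fun _ => True) E
  simp only [true_and, prob_true] at h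
  linarith

theorem prob_exists_le_sum (hp0 : 0 ≤ p) (hp1 : p ≤ 1) {ι : Type*} [Fintype ι]
    (B : ι → Finset α → Prop) : prob S p (fun H => ∃ i, B i H) ≤ ∑ i, prob S p (B i) := by
  simp only [prob]
  rw [Finset.sum_comm]
  refine Finset.sum_le_sum fun H _ => ?_
  split_ifs with hB
  · obtain ⟨i, hi⟩ := hB
    calc _ = if B i H then p ^ H.card * (1 - p) ^ (S.card - H.card) else 0 := (if_pos hi).symm
      _ ≤ _ := Finset.single_le_sum (fun j _ => summand_nonneg hp0 hp1 (B j H) H)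
          (Finset.mem_univ i)
  · exact Finset.sum_nonneg fun j _ => summand_nonneg hp0 hp1 _ H

theorem prob_insert [DecidableEq α] {q : α} (hq : q ∉ S) (E : Finset α → Prop) :
    prob (insert q S) p E = p * prob S p (fun H => E (insert q H)) + (1 - p) * prob S p E := by
  rw [prob, Finset.sum_powerset_insert hq, add_comm, prob, prob, Finset.mul_sum, Finset.mul_sum,
    Finset.card_insert_of_notMem hq]
  congr 1 <;> refine Finset.sum_congr rfl fun H hH => ?_ <;> split_ifs <;>
    try simp only [mul_zero]
  all_goals have hHS := Finset.card_le_card (Finset.mem_powerset.1 hH)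
  · rw [Finset.card_insert_of_notMem fun h => hq (Finset.mem_powerset.1 hH h),
      show S.card + 1 - (H.card + 1) = S.card - H.card by omega]
    ring
  · rw [show S.card + 1 - H.card = S.card - H.card + 1 by omega]
    ring

theorem prob_and_mem [DecidableEq α] {q : α} (hq : q ∈ S)
    (hE : ∀ H ⊆ S.erase q, E (insert q H) ↔ E H) :
    prob S p (fun H => E H ∧ q ∈ H) = p * prob S p E := by
  have hq' : q ∉ S.erase q := Finset.notMem_erase q S
  rw [← Finset.insert_erase hq, prob_insert hq', prob_insert hq',
    prob_congr (E := fun H => E H ∧ q ∈ H) (F := fun _ => False)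
      fun H hH => iff_false_intro fun h => hq' (hH h.2), prob_false,
    prob_congr (E := fun H => E (insert q H) ∧ q ∈ insert q H) (F := E)
      fun H hH => by simp [hE H hH],
    prob_congr (E := fun H => E (insert q H)) (F := E) hE]
  ring

theorem prob_and_not_mem [DecidableEq α] {q : α} (hq : q ∈ S)
    (hE : ∀ H ⊆ S.erase q, E (insert q H) ↔ E H) :
    prob S p (fun H => E H ∧ q ∉ H) = (1 - p) * prob S p E := by
  have h := prob_and_add_prob_and_not (S := S) (p := p) (E := E) (fun H => q ∈ H)
  rw [prob_and_mem hq hE] at h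
  linarith

end RandomSubset

/-- `binomTail p r t` is the probability that a binomial `Bin(r, p)` variable is at least `t`. -/
noncomputable def binomTail (p : ℝ) : ℕ → ℕ → ℝ
  | _, 0 => 1
  | 0, _ + 1 => 0
  | r + 1, t + 1 => p * binomTail p r t + (1 - p) * binomTail p r (t + 1)

section binomTail

variable {p : ℝ}

@[simp] theorem binomTail_zero_right (r : ℕ) : binomTail p r 0 = 1 := by cases r <;> rfl

@[simp] theorem binomTail_zero_succ (t : ℕ) : binomTail p 0 (t + 1) = 0 := rfl

theorem binomTail_succ_succ (r t : ℕ) :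
    binomTail p (r + 1) (t + 1) = p * binomTail p r t + (1 - p) * binomTail p r (t + 1) := rfl

theorem binomTail_nonneg (hp0 : 0 ≤ p) (hp1 : p ≤ 1) (r t : ℕ) : 0 ≤ binomTail p r t := by
  induction r generalizing t with
  | zero => cases t <;> simp
  | succ r ih =>
    cases t with
    | zero => simp
    | succ t =>
      rw [binomTail_succ_succ]
      have := ih t
      have := ih (t + 1)
      nlinarith

theorem binomTail_le_succ (hp0 : 0 ≤ p) (hp1 : p ≤ 1) (r t : ℕ) :
    binomTail p r t ≤ binomTail p (r + 1) t := by
  induction r generalizing t with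
  | zero => cases t <;> simp [binomTail_nonneg hp0 hp1]
  | succ r ih =>
    cases t with
    | zero => simp
    | succ t =>
      rw [binomTail_succ_succ, binomTail_succ_succ]
      have := ih t
      have := ih (t + 1)
      nlinarith

/-- Markov's inequality for `exp (l X)`, where `1 - p + p * exp l` is the moment generating
function of a Bernoulli variable. -/
theorem binomTail_le_mgf (hp0 : 0 ≤ p) (hp1 : p ≤ 1) {l : ℝ} (hl : 0 ≤ l) (r t : ℕ) :
    binomTail p r t ≤ (1 - p + p * Real.exp l) ^ r * Real.exp (-(l * t)) := by
  have hel : 1 ≤ Real.exp l := Real.one_le_exp hl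
  have hm : 1 ≤ 1 - p + p * Real.exp l := by nlinarith
  induction r generalizing t with
  | zero => cases t <;> simp; positivity
  | succ r ih =>
    cases t with
    | zero => simpa using one_le_pow₀ hm
    | succ t =>
      have h1 := mul_le_mul_of_nonneg_left (ih t) hp0
      have h2 := mul_le_mul_of_nonneg_left (ih (t + 1)) (sub_nonneg.2 hp1)
      have hexp : Real.exp (-(l * t)) = Real.exp l * Real.exp (-(l * (t + 1 : ℕ))) := by
        rw [← Real.exp_add]; push_cast; ring_nf
      rw [binomTail_succ_succ, pow_succ]
      rw [hexp] at h1
      nlinarith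

theorem binomTail_le_exp (hp0 : 0 ≤ p) (hp1 : p ≤ 1) {l : ℝ} (hl : 0 ≤ l) (r t : ℕ) :
    binomTail p r t ≤ Real.exp (r * (p * (Real.exp l - 1)) - l * t) := by
  have hm : 0 ≤ 1 - p + p * Real.exp l := by nlinarith [Real.one_le_exp hl]
  calc binomTail p r t ≤ (1 - p + p * Real.exp l) ^ r * Real.exp (-(l * t)) :=
        binomTail_le_mgf hp0 hp1 hl r t
    _ ≤ Real.exp (p * (Real.exp l - 1)) ^ r * Real.exp (-(l * t)) := by
        gcongr
        linarith [Real.add_one_le_exp (p * (Real.exp l - 1))]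
    _ = Real.exp (r * (p * (Real.exp l - 1)) - l * t) := by
        rw [← Real.exp_nat_mul, ← Real.exp_add]; ring_nf

end binomTail

section component

variable {V : Type*} {H : Finset (Finset V)} {v : V}

theorem mem_component_self : v ∈ component H v := Relation.ReflTransGen.refl

theorem coe_subset_component {e : Finset V} (he : e ∈ H) {w : V} (hwe : w ∈ e)
    (hw : w ∈ component H v) : ↑e ⊆ component H v :=
  fun _ hx => Relation.ReflTransGen.tail hw ⟨e, he, hwe, hx⟩

theorem component_subset_of_closed {D : Finset V} (hvD : v ∈ D)
    (hD : ∀ e ∈ H, ¬ Disjoint e D → e ⊆ D) : component H v ⊆ ↑D := by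
  intro x hx
  induction hx with
  | refl => exact hvD
  | tail _ hxy ih =>
    obtain ⟨e, he, hxe, hye⟩ := hxy
    exact hD e he (Finset.not_disjoint_iff.2 ⟨_, hxe, ih⟩) hye

theorem ncard_component_le_of_closed {D : Finset V} (hvD : v ∈ D)
    (hD : ∀ e ∈ H, ¬ Disjoint e D → e ⊆ D) : (component H v).ncard ≤ D.card := by
  simpa using Set.ncard_le_ncard (component_subset_of_closed hvD hD) D.finite_toSet

end component

theorem Finset.card_union_le_of_not_disjoint {α : Type*} [DecidableEq α] {s t : Finset α}
    (h : ¬ Disjoint t s) : (s ∪ t).card ≤ s.card + (t.card - 1) := by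
  obtain ⟨w, hwt, hws⟩ := Finset.not_disjoint_iff.1 h
  have : (t \ s).card ≤ t.card - 1 := by
    rw [← Finset.card_erase_of_mem hwt]
    exact Finset.card_le_card fun x hx => Finset.mem_erase.2
      ⟨fun hxw => (Finset.mem_sdiff.1 hx).2 (hxw ▸ hws), (Finset.mem_sdiff.1 hx).1⟩
  rw [Finset.union_comm, ← Finset.card_sdiff_add_card]
  omega

namespace Exploration

open RandomSubset

section

variable {V : Type*}

/-- The invariant of the states `(P, D, Q)` of `explore` started from `v`: every hyperedge meeting
a processed vertex is either still queued or already absorbed into `D`. -/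
structure Invariant (H : Finset (Finset V)) (v : V) (P D : Finset V) (Q : List (Finset V)) :
    Prop where
  mem : v ∈ D
  processed_subset : P ⊆ D
  subset_component : ↑D ⊆ component H v
  not_disjoint : ∀ e ∈ Q, ¬ Disjoint e P
  closed : ∀ e ∈ H, ¬ Disjoint e P → e ∉ Q → e ⊆ D

namespace Invariant

variable {H : Finset (Finset V)} {v : V} {s : ℕ} {P D q : Finset V} {Q : List (Finset V)}

theorem start : Invariant H v ∅ {v} [] where
  mem := Finset.mem_singleton_self v
  processed_subset := Finset.empty_subset _
  subset_component := by simpa using mem_component_self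
  not_disjoint := by simp
  closed := by simp

theorem found (h : Invariant H v P D (q :: Q)) (hq : q ∈ H) : Invariant H v P (D ∪ q) Q := by
  obtain ⟨w, hwq, hwP⟩ := Finset.not_disjoint_iff.1 (h.not_disjoint q List.mem_cons_self)
  refine ⟨Finset.mem_union_left _ h.mem, h.processed_subset.trans Finset.subset_union_left, ?_,
    fun e he => h.not_disjoint e (List.mem_cons_of_mem q he), fun e he heP heQ => ?_⟩
  · rw [Finset.coe_union]
    exact Set.union_subset h.subset_component
      (coe_subset_component hq hwq (h.subset_component (h.processed_subset hwP)))
  · by_cases heq : e = q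
    · exact heq ▸ Finset.subset_union_right
    · exact (h.closed e he heP (by simp [heq, heQ])).trans Finset.subset_union_left

theorem skip (h : Invariant H v P D (q :: Q)) (hq : q ∉ H) : Invariant H v P D Q := by
  refine ⟨h.mem, h.processed_subset, h.subset_component,
    fun e he => h.not_disjoint e (List.mem_cons_of_mem q he),
    fun e he heP heQ => h.closed e he heP ?_⟩
  rintro (_ | ⟨_, heQ'⟩)
  exacts [hq he, heQ heQ']

theorem lt_card (h : Invariant H v P D []) (hs : s < (component H v).ncard)
    (hDP : D ⊆ P ∨ s ≤ P.card) : s < D.card := by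
  by_cases hDP' : D ⊆ P
  · obtain rfl : D = P := hDP'.antisymm h.processed_subset
    exact hs.trans_le (ncard_component_le_of_closed h.mem
      fun e he heD => h.closed e he heD List.not_mem_nil)
  · exact (hDP.resolve_left hDP').trans_lt (Finset.card_lt_card
      (Finset.ssubset_iff_subset_ne.2 ⟨h.processed_subset, fun h => hDP' h.ge⟩))

end Invariant

end

variable {V : Type*} [Fintype V] {k : ℕ}

noncomputable def freshEdges (k : ℕ) (u : V) (P : Finset V) : List (Finset V) :=
  ({e | e.card = k ∧ u ∈ e ∧ Disjoint e P} : Finset (Finset V)).toList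

theorem mem_freshEdges {u : V} {P e : Finset V} :
    e ∈ freshEdges k u P ↔ e.card = k ∧ u ∈ e ∧ Disjoint e P := by
  simp [freshEdges]

theorem length_freshEdges_le (u : V) (P : Finset V) :
    (freshEdges k u P).length ≤ (Fintype.card V - 1).choose (k - 1) := by
  rw [freshEdges, Finset.length_toList, ← Finset.card_univ, ← Finset.card_erase_of_mem
    (Finset.mem_univ u), ← Finset.card_powersetCard]
  refine Finset.card_le_card_of_injOn (fun e => e.erase u) (fun e he => ?_) fun e₁ h₁ e₂ h₂ h => ?_
  · simp only [Finset.coe_filter, Finset.mem_univ, true_and, Set.mem_ofPred_eq] at he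
    simp [Finset.mem_powersetCard, Finset.erase_subset_erase, Finset.card_erase_of_mem he.2.1, he.1]
  · simp only [Finset.coe_filter, Finset.mem_univ, true_and, Set.mem_ofPred_eq] at h₁ h₂
    rw [← Finset.insert_erase h₁.2.1, ← Finset.insert_erase h₂.2.1]
    exact congrArg (insert u) h

/-- Breadth-first exploration of `H` for `fuel` steps, returning the number of hyperedges found:
`D` is the set of discovered vertices, `P ⊆ D` the processed ones, and `Q` the potential
hyperedges still to be queried for the vertex being processed. -/
noncomputable def explore (k : ℕ) (H : Finset (Finset V)) :
    ℕ → Finset V → Finset V → List (Finset V) → ℕ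
  | 0, _, _, _ => 0
  | fuel + 1, P, D, q :: Q =>
    if q ∈ H then explore k H fuel P (D ∪ q) Q + 1 else explore k H fuel P D Q
  | fuel + 1, P, D, [] =>
    if hD : (D \ P).Nonempty then
      explore k H fuel (insert hD.choose P) D (freshEdges k hD.choose P)
    else 0

variable {H : Finset (Finset V)} {v : V} {s : ℕ} {p : ℝ}

theorem explore_succ_cons_of_mem {fuel : ℕ} {P D q : Finset V} {Q : List (Finset V)}
    (hq : q ∈ H) : explore k H (fuel + 1) P D (q :: Q) = explore k H fuel P (D ∪ q) Q + 1 :=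
  if_pos hq

theorem explore_succ_cons_of_notMem {fuel : ℕ} {P D q : Finset V} {Q : List (Finset V)}
    (hq : q ∉ H) : explore k H (fuel + 1) P D (q :: Q) = explore k H fuel P D Q :=
  if_neg hq

theorem explore_succ_nil_of_nonempty {fuel : ℕ} {P D : Finset V} (hD : (D \ P).Nonempty) :
    explore k H (fuel + 1) P D [] =
      explore k H fuel (insert hD.choose P) D (freshEdges k hD.choose P) :=
  dif_pos hD

theorem explore_succ_nil_of_subset {fuel : ℕ} {P D : Finset V} (hD : D ⊆ P) :
    explore k H (fuel + 1) P D [] = 0 :=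
  dif_neg (by simpa [Finset.sdiff_nonempty] using hD)

theorem explore_congr {H₁ H₂ : Finset (Finset V)} (fuel : ℕ) (P D : Finset V)
    (Q : List (Finset V)) (h : ∀ e, e ∈ Q ∨ Disjoint e P → (e ∈ H₁ ↔ e ∈ H₂)) :
    explore k H₁ fuel P D Q = explore k H₂ fuel P D Q := by
  induction fuel generalizing P D Q with
  | zero => rfl
  | succ fuel ih =>
    cases Q with
    | cons q Q =>
      have hQ : ∀ e, e ∈ Q ∨ Disjoint e P → (e ∈ H₁ ↔ e ∈ H₂) := fun e he =>
        h e (he.imp_left (List.mem_cons_of_mem q))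
      by_cases hq : q ∈ H₁
      · rw [explore_succ_cons_of_mem hq,
          explore_succ_cons_of_mem ((h q (.inl List.mem_cons_self)).1 hq), ih _ _ _ hQ]
      · rw [explore_succ_cons_of_notMem hq,
          explore_succ_cons_of_notMem (mt (h q (.inl List.mem_cons_self)).2 hq), ih _ _ _ hQ]
    | nil =>
      by_cases hD : (D \ P).Nonempty
      · rw [explore_succ_nil_of_nonempty hD, explore_succ_nil_of_nonempty hD]
        refine ih _ _ _ fun e he => h e (.inr ?_)
        rcases he with he | he
        · exact (mem_freshEdges.1 he).2.2
        · exact Finset.disjoint_of_subset_right (Finset.subset_insert _ _) he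
      · rw [Finset.not_nonempty_iff_eq_empty, Finset.sdiff_eq_empty_iff_subset] at hD
        rw [explore_succ_nil_of_subset hD, explore_succ_nil_of_subset hD]

/-- The answer to the query `q` is independent of the rest of the exploration, which never looks
at `q` again. -/
theorem prob_succ_le_explore_cons {fuel t : ℕ} {P D q : Finset V} {Q : List (Finset V)}
    (hqk : q.card = k) (hqP : ¬ Disjoint q P) (hqQ : q ∉ Q) :
    prob (Finset.powersetCard k Finset.univ) p
        (fun H => t + 1 ≤ explore k H (fuel + 1) P D (q :: Q)) =
      p * prob (Finset.powersetCard k Finset.univ) p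
          (fun H => t ≤ explore k H fuel P (D ∪ q) Q) +
        (1 - p) * prob (Finset.powersetCard k Finset.univ) p
          (fun H => t + 1 ≤ explore k H fuel P D Q) := by
  have hqS : q ∈ Finset.powersetCard k Finset.univ := by simp [hqk]
  have hind : ∀ D' t', ∀ H ⊆ (Finset.powersetCard k Finset.univ).erase q,
      (t' ≤ explore k (insert q H) fuel P D' Q ↔ t' ≤ explore k H fuel P D' Q) :=
    fun D' t' H _ => by
      rw [explore_congr fuel P D' Q fun e he => ?_]
      have hne : e ≠ q := by
        rintro rfl
        exact he.elim hqQ hqP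
      simp [hne]
  rw [← prob_and_mem hqS (hind _ _), ← prob_and_not_mem hqS (hind _ _),
    ← prob_and_add_prob_and_not (fun H => q ∈ H)]
  congr 1 <;> refine prob_congr fun H _ => ?_ <;> by_cases hq : q ∈ H <;>
    simp [hq, explore_succ_cons_of_mem, explore_succ_cons_of_notMem]

/-- Since `freshEdges` avoids `P`, no potential hyperedge is queried twice, and each answer is
independent of everything seen before. -/
theorem prob_le_explore_le_binomTail (hp0 : 0 ≤ p) (hp1 : p ≤ 1) (fuel t : ℕ) (P D : Finset V)
    (Q : List (Finset V)) (hQ : ∀ e ∈ Q, e.card = k ∧ ¬ Disjoint e P) (hQnd : Q.Nodup) :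
    prob (Finset.powersetCard k Finset.univ) p (fun H => t ≤ explore k H fuel P D Q) ≤
      binomTail p fuel t := by
  induction fuel generalizing t P D Q with
  | zero =>
    cases t with
    | zero => simpa using prob_le_one hp0 hp1 _
    | succ t => simp [explore, prob_false]
  | succ fuel ih =>
    cases t with
    | zero => simpa using prob_le_one hp0 hp1 _
    | succ t =>
      cases Q with
      | nil =>
        by_cases hD : (D \ P).Nonempty
        · simp only [explore_succ_nil_of_nonempty hD]
          refine (ih _ _ _ _ (fun e he => ?_) (Finset.nodup_toList _)).trans
            (binomTail_le_succ hp0 hp1 _ _)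
          obtain ⟨he, hue, -⟩ := mem_freshEdges.1 he
          exact ⟨he, Finset.not_disjoint_iff.2 ⟨_, hue, Finset.mem_insert_self _ _⟩⟩
        · rw [Finset.not_nonempty_iff_eq_empty, Finset.sdiff_eq_empty_iff_subset] at hD
          simpa [explore_succ_nil_of_subset hD, prob_false] using binomTail_nonneg hp0 hp1 _ _
      | cons q Q =>
        have hQ' : ∀ e ∈ Q, e.card = k ∧ ¬ Disjoint e P := fun e he =>
          hQ e (List.mem_cons_of_mem q he)
        obtain ⟨hqk, hqP⟩ := hQ q List.mem_cons_self
        obtain ⟨hqQ, hQnd'⟩ := List.nodup_cons.1 hQnd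
        rw [prob_succ_le_explore_cons hqk hqP hqQ, binomTail_succ_succ]
        exact add_le_add (mul_le_mul_of_nonneg_left (ih _ _ _ _ hQ' hQnd') hp0)
          (mul_le_mul_of_nonneg_left (ih _ _ _ _ hQ' hQnd') (sub_nonneg.2 hp1))

theorem Invariant.next (hH : ∀ e ∈ H, e.card = k) {P D : Finset V}
    (h : Invariant H v P D []) {u : V} (hu : u ∈ D) :
    Invariant H v (insert u P) D (freshEdges k u P) := by
  refine ⟨h.mem, Finset.insert_subset hu h.processed_subset, h.subset_component,
    fun e he => Finset.not_disjoint_iff.2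
      ⟨_, (mem_freshEdges.1 he).2.1, Finset.mem_insert_self _ _⟩,
    fun e he heP heQ => h.closed e he (fun heP' => heQ ?_) List.not_mem_nil⟩
  refine mem_freshEdges.2 ⟨hH e he, ?_, heP'⟩
  obtain ⟨x, hxe, hx⟩ := Finset.not_disjoint_iff.1 heP
  rcases Finset.mem_insert.1 hx with rfl | hxP
  exacts [hxe, absurd hxP (Finset.disjoint_left.1 heP' hxe)]

theorem fuel_step {a s l C fuel : ℕ} (has : a < s) (hl : l ≤ C)
    (hfuel : (s - a) * (1 + C) ≤ fuel + 1) : l + (s - (a + 1)) * (1 + C) ≤ fuel := by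
  obtain ⟨b, hb⟩ : ∃ b, s - a = b + 1 := ⟨s - a - 1, by omega⟩
  rw [hb, Nat.succ_mul] at hfuel
  rw [show s - (a + 1) = b by omega]
  omega

/-- The exploration stops short of processing `s` vertices only when `D` is closed, hence contains
the whole component, and each hyperedge found adds at most `k - 1` vertices to `D`. Processing a
vertex costs one step plus at most `C(|V| - 1, k - 1)` queries, whence the fuel budget. -/
theorem lt_card_add_mul_explore (hH : ∀ e ∈ H, e.card = k) (hs : s < (component H v).ncard)
    (fuel : ℕ) {P D : Finset V} {Q : List (Finset V)} (h : Invariant H v P D Q)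
    (hPs : P.card ≤ s)
    (hfuel : Q.length + (s - P.card) * (1 + (Fintype.card V - 1).choose (k - 1)) ≤ fuel) :
    s < D.card + (k - 1) * explore k H fuel P D Q := by
  induction fuel generalizing P D Q with
  | zero =>
    obtain rfl : Q = [] := List.eq_nil_of_length_eq_zero (by omega)
    have hsP : s - P.card = 0 := by simpa using hfuel
    exact Nat.lt_add_right _ (h.lt_card hs (.inr (by omega)))
  | succ fuel ih =>
    cases Q with
    | cons q Q =>
      have hfuel' : Q.length + (s - P.card) * (1 + (Fintype.card V - 1).choose (k - 1)) ≤
          fuel := by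
        simp only [List.length_cons] at hfuel
        omega
      by_cases hq : q ∈ H
      · obtain ⟨w, hwq, hwP⟩ := Finset.not_disjoint_iff.1 (h.not_disjoint q List.mem_cons_self)
        have hgrow : (D ∪ q).card ≤ D.card + (k - 1) :=
          hH q hq ▸ Finset.card_union_le_of_not_disjoint
            (Finset.not_disjoint_iff.2 ⟨w, hwq, h.processed_subset hwP⟩)
        have := ih (h.found hq) hPs hfuel'
        rw [explore_succ_cons_of_mem hq, Nat.mul_succ]
        omega
      · rw [explore_succ_cons_of_notMem hq]
        exact ih (h.skip hq) hPs hfuel'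
    | nil =>
      by_cases hDP : (D \ P).Nonempty
      · obtain ⟨huD, huP⟩ := Finset.mem_sdiff.1 hDP.choose_spec
        rw [explore_succ_nil_of_nonempty hDP]
        by_cases hPs' : P.card < s
        · refine ih (h.next hH huD) ?_ ?_ <;> rw [Finset.card_insert_of_notMem huP]
          · omega
          · exact fuel_step hPs' (length_freshEdges_le _ P) (by simpa using hfuel)
        · exact Nat.lt_add_right _ (h.lt_card hs (.inr (by omega)))
      · rw [Finset.not_nonempty_iff_eq_empty, Finset.sdiff_eq_empty_iff_subset] at hDP
        exact Nat.lt_add_right _ (h.lt_card hs (.inl hDP))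

end Exploration

open RandomSubset Exploration in
theorem prob_lt_ncard_component_le {V : Type*} [Fintype V] {k : ℕ} {p : ℝ} (hp0 : 0 ≤ p)
    (hp1 : p ≤ 1) (hk : 2 ≤ k) (s : ℕ) (v : V) :
    prob (Finset.powersetCard k Finset.univ) p (fun H => s < (component H v).ncard) ≤
      binomTail p (s * (1 + (Fintype.card V - 1).choose (k - 1))) (s ⌈/⌉ (k - 1)) := by
  refine (prob_mono hp0 hp1 fun H hH hs => ?_).trans
    (prob_le_explore_le_binomTail hp0 hp1 _ _ ∅ {v} [] (by simp) List.nodup_nil)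
  have hH : ∀ e ∈ H, e.card = k := fun e he => (Finset.mem_powersetCard.1 (hH he)).2
  have := lt_card_add_mul_explore hH hs (s * (1 + (Fintype.card V - 1).choose (k - 1)))
    Invariant.start (by simp) (by simp)
  rw [ceilDiv_le_iff_le_mul (by omega)]
  rw [Finset.card_singleton] at this
  omega

theorem probHnp_eq_prob (n k : ℕ) (p : ℝ) (A : Finset (Finset (Fin n)) → Prop) :
    probHnp n k p A = RandomSubset.prob (Finset.powersetCard k Finset.univ) p A := by
  rw [probHnp, RandomSubset.prob, Finset.card_powersetCard, Finset.card_univ, Fintype.card_fin,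
    ← Finset.sum_subset (Finset.subset_univ _) fun H _ hH => if_neg fun h => hH ?_]
  · refine Finset.sum_congr rfl fun H hH => if_congr ⟨And.right, fun hA => ⟨?_, hA⟩⟩ rfl rfl
    exact fun e he => (Finset.mem_powersetCard.1 (Finset.mem_powerset.1 hH he)).2
  · exact Finset.mem_powerset.2 fun e he =>
      Finset.mem_powersetCard.2 ⟨Finset.subset_univ e, h.1 e he⟩

section estimates

variable {ε : ℝ}

theorem exponent_le_neg_two_mul (hε0 : 0 < ε) (hε : ε < 1 / 2) {κ μ s t ℓ : ℝ} (hκ : 1 ≤ κ)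
    (hs0 : 0 ≤ s) (hμ : κ * μ ≤ s * ((1 - 0.8 * ε) * (1 + ε / 200))) (ht : s ≤ κ * t)
    (hs : 16 * (κ + 1) * ℓ - ε ^ 2 ≤ ε ^ 2 * s) (hℓ : 1 ≤ ℓ) :
    μ * (ε / 2 + (ε / 2) ^ 2) - ε / 2 * t ≤ -(2 * ℓ) := by
  have hgap : (1 - 0.8 * ε) * (1 + ε / 200) * (ε / 2 + (ε / 2) ^ 2) - ε / 2 ≤ -(ε ^ 2 / 8) := by
    nlinarith [mul_pos hε0 hε0, mul_pos (mul_pos hε0 hε0) hε0]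
  have hβ : 0 ≤ ε / 2 + (ε / 2) ^ 2 := by positivity
  refine le_of_mul_le_mul_left ?_ (by linarith : (0 : ℝ) < κ)
  calc κ * (μ * (ε / 2 + (ε / 2) ^ 2) - ε / 2 * t)
      ≤ s * ((1 - 0.8 * ε) * (1 + ε / 200)) * (ε / 2 + (ε / 2) ^ 2) - ε / 2 * s := by
        nlinarith [mul_le_mul_of_nonneg_right hμ hβ]
    _ ≤ s * -(ε ^ 2 / 8) := by nlinarith [mul_le_mul_of_nonneg_left hgap hs0]
    _ ≤ κ * -(2 * ℓ) := by nlinarith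

theorem exp_sub_one_le (hε0 : 0 < ε) (hε : ε < 1 / 2) :
    Real.exp (ε / 2) - 1 ≤ ε / 2 + (ε / 2) ^ 2 := by
  have := Real.abs_exp_sub_one_sub_id_le (x := ε / 2) (by rw [abs_le]; constructor <;> linarith)
  linarith [le_abs_self (Real.exp (ε / 2) - 1 - ε / 2)]

theorem two_hundred_mul_factorial_le (hε0 : 0 < ε) (hε1 : ε ≤ 1) {m n : ℕ}
    (hn : (200 : ℝ) * (m + 2 : ℕ) ^ 2 / ε < n) :
    200 * ((m + 1).factorial : ℝ) ≤ ε * n ^ (m + 1) := by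
  rw [div_lt_iff₀ hε0] at hn
  push_cast at hn
  have hmn : (m + 1 : ℝ) ≤ n := by nlinarith
  have hfact : ((m + 1).factorial : ℝ) ≤ (m + 1) ^ (m + 1) := by
    exact_mod_cast Nat.factorial_le_pow (m + 1)
  calc 200 * ((m + 1).factorial : ℝ) ≤ 200 * ((m + 1) * (m + 1) ^ m) := by
        rw [← pow_succ']; gcongr
    _ ≤ 200 * (m + 2) ^ 2 * n ^ m := by
        rw [← mul_assoc]; gcongr; nlinarith
    _ ≤ n * ε * n ^ m := by gcongr
    _ = ε * n ^ (m + 1) := by ring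

theorem mul_mean_le {c : ℝ} (hc : 0 ≤ c) {m n : ℕ} (hn : 0 < n)
    (hfact : 200 * ((m + 1).factorial : ℝ) ≤ ε * n ^ (m + 1)) (s : ℕ) :
    (m + 1 : ℝ) * ((s * (1 + (n - 1).choose (m + 1)) : ℕ) * (c * m.factorial / n ^ (m + 1))) ≤
      s * (c * (1 + ε / 200)) := by
  have hC : (m + 1).factorial * (n - 1).choose (m + 1) ≤ n ^ (m + 1) :=
    (Nat.descFactorial_eq_factorial_mul_choose _ _ ▸ Nat.descFactorial_le_pow _ _).trans
      (Nat.pow_le_pow_left (Nat.sub_le n 1) _)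
  have hn' : (0 : ℝ) < n ^ (m + 1) := by positivity
  calc (m + 1 : ℝ) * ((s * (1 + (n - 1).choose (m + 1)) : ℕ) * (c * m.factorial / n ^ (m + 1)))
      = s * c * (((m + 1).factorial : ℝ) + ((m + 1).factorial * (n - 1).choose (m + 1) : ℕ)) /
          n ^ (m + 1) := by
        push_cast [Nat.factorial_succ]
        ring
    _ ≤ s * c * (ε * n ^ (m + 1) / 200 + n ^ (m + 1)) / n ^ (m + 1) := by
        gcongr
        · linarith
        · exact_mod_cast hC
    _ = s * (c * (1 + ε / 200)) := by
        field_simp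
        ring

theorem one_le_log (hε0 : 0 < ε) (hε : ε < 1 / 2) {m n : ℕ}
    (hn : (200 : ℝ) * (m + 2 : ℕ) ^ 2 / ε < n) : 1 ≤ Real.log n := by
  have hn1600 : (1600 : ℝ) < n := by
    refine lt_of_le_of_lt ?_ hn
    rw [le_div_iff₀ hε0]
    push_cast
    nlinarith [(Nat.cast_nonneg m : (0 : ℝ) ≤ m)]
  rw [Real.le_log_iff_exp_le (by linarith)]
  linarith [Real.exp_one_lt_d9]

theorem mul_sub_le_sq_mul_floor (hε : ε ≠ 0) (a b : ℝ) :
    a * b - ε ^ 2 ≤ ε ^ 2 * ⌊a / ε ^ 2 * b⌋₊ := by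
  have hab : ε ^ 2 * (a / ε ^ 2 * b) = a * b := by field_simp
  nlinarith [mul_lt_mul_of_pos_left (Nat.lt_floor_add_one (a / ε ^ 2 * b))
    (by positivity : 0 < ε ^ 2)]

end estimates

theorem edgeProb_mem_Icc {ε : ℝ} (hε0 : 0 < ε) (hε : ε < 1 / 2) {k n : ℕ} (hk : 2 ≤ k)
    (hn : (200 : ℝ) * k ^ 2 / ε < n) :
    (1 - 0.8 * ε) * (k - 2).factorial / (n : ℝ) ^ (k - 1) ∈ Set.Icc 0 1 := by
  obtain ⟨m, rfl⟩ : ∃ m, k = m + 2 := ⟨k - 2, by omega⟩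
  simp only [Nat.add_sub_cancel, show m + 2 - 1 = m + 1 from rfl] at hn ⊢
  have hfact := two_hundred_mul_factorial_le hε0 (by linarith) hn
  have : (m.factorial : ℝ) ≤ (m + 1).factorial := by exact_mod_cast Nat.factorial_le m.le_succ
  have hn0 : (0 : ℝ) < n := lt_of_le_of_lt (by positivity) hn
  refine ⟨div_nonneg (mul_nonneg (by linarith) (Nat.cast_nonneg _)) (by positivity),
    (div_le_one (by positivity)).2 ?_⟩
  nlinarith [mul_le_of_le_one_left (Nat.cast_nonneg m.factorial) (by linarith : 1 - 0.8 * ε ≤ 1),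
    mul_le_mul_of_nonneg_right (by linarith : ε ≤ 200) (by positivity : (0 : ℝ) ≤ n ^ (m + 1))]

theorem binomTail_le_one_div_sq {ε : ℝ} (hε0 : 0 < ε) (hε : ε < 1 / 2) {k n : ℕ} (hk : 2 ≤ k)
    (hn : (200 : ℝ) * k ^ 2 / ε < n) :
    binomTail ((1 - 0.8 * ε) * (k - 2).factorial / (n : ℝ) ^ (k - 1))
        (⌊16 * k / ε ^ 2 * Real.log n⌋₊ * (1 + (n - 1).choose (k - 1)))
        (⌊16 * k / ε ^ 2 * Real.log n⌋₊ ⌈/⌉ (k - 1)) ≤ 1 / n ^ 2 := by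
  obtain ⟨hp0, hp1⟩ := edgeProb_mem_Icc hε0 hε hk hn
  obtain ⟨m, rfl⟩ : ∃ m, k = m + 2 := ⟨k - 2, by omega⟩
  simp only [Nat.add_sub_cancel, show m + 2 - 1 = m + 1 from rfl] at hn hp0 hp1 ⊢
  have hc0 : 0 ≤ 1 - 0.8 * ε := by linarith
  set s := ⌊16 * ((m + 2 : ℕ) : ℝ) / ε ^ 2 * Real.log n⌋₊
  set t := s ⌈/⌉ (m + 1)
  set N := s * (1 + (n - 1).choose (m + 1))
  have hfact := two_hundred_mul_factorial_le hε0 (by linarith) hn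
  have hn0 : (0 : ℝ) < n := lt_of_le_of_lt (by positivity) hn
  have hlog := one_le_log hε0 hε hn
  have hs : 16 * ((m + 2 : ℕ) : ℝ) * Real.log n - ε ^ 2 ≤ ε ^ 2 * s :=
    mul_sub_le_sq_mul_floor hε0.ne' _ _
  rw [show ((m + 2 : ℕ) : ℝ) = (m + 1 : ℝ) + 1 by push_cast; ring] at hs
  have ht : (s : ℝ) ≤ (m + 1 : ℝ) * t := by exact_mod_cast le_smul_ceilDiv (Nat.succ_pos m)
  have hμ := mul_mean_le hc0 (Nat.cast_pos.1 hn0) hfact s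
  have hX := exponent_le_neg_two_mul hε0 hε (by linarith) (Nat.cast_nonneg s) hμ ht hs hlog
  have hβ := exp_sub_one_le hε0 hε
  calc binomTail ((1 - 0.8 * ε) * m.factorial / (n : ℝ) ^ (m + 1)) N t
      ≤ Real.exp (N * ((1 - 0.8 * ε) * m.factorial / (n : ℝ) ^ (m + 1) * (Real.exp (ε / 2) - 1)) -
          ε / 2 * t) := binomTail_le_exp hp0 hp1 (by positivity) N t
    _ ≤ Real.exp (-(2 * Real.log n)) := by
        gcongr
        nlinarith [mul_nonneg (Nat.cast_nonneg N) hp0]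
    _ = 1 / n ^ 2 := by
        rw [Real.exp_neg, show 2 * Real.log n = Real.log (n ^ 2) by rw [Real.log_pow]; norm_num,
          Real.exp_log (pow_pos hn0 2), one_div]

open RandomSubset in
/-- For `0 < ε < 1/2`, `k ≥ 2`, `n > 200k²/ε` and
`p = (1 - 0.8ε)·(k-2)!/n^{k-1}`, in `H_{n,p;k}` with probability at least `1 - 1/n` every
connected component has at most `(16k/ε²)·log n` vertices. -/
theorem all_components_small (ε : ℝ) (hε0 : 0 < ε) (hε : ε < 1 / 2)
    (k : ℕ) (hk : 2 ≤ k) (n : ℕ) (hn : (200 : ℝ) * k ^ 2 / ε < n) :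
    (1 : ℝ) - 1 / n ≤
      probHnp n k ((1 - 0.8 * ε) * (Nat.factorial (k - 2)) / (n : ℝ) ^ (k - 1))
        (fun H => ∀ v : Fin n,
          ((component H v).ncard : ℝ) ≤ 16 * k / ε ^ 2 * Real.log n) := by
  obtain ⟨hp0, hp1⟩ := edgeProb_mem_Icc hε0 hε hk hn
  set p := (1 - 0.8 * ε) * (Nat.factorial (k - 2)) / (n : ℝ) ^ (k - 1)
  set L := 16 * k / ε ^ 2 * Real.log n
  have hL : 0 ≤ L := by positivity
  have hbad : prob (Finset.powersetCard k Finset.univ) p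
      (fun H => ¬ ∀ v : Fin n, ((component H v).ncard : ℝ) ≤ L) ≤ 1 / n :=
    calc _ ≤ prob (Finset.powersetCard k Finset.univ) p
          (fun H => ∃ v : Fin n, ⌊L⌋₊ < (component H v).ncard) :=
          prob_mono hp0 hp1 fun H _ h => by simpa [Nat.floor_lt hL] using h
      _ ≤ ∑ v : Fin n, prob (Finset.powersetCard k Finset.univ) p
          (fun H => ⌊L⌋₊ < (component H v).ncard) := prob_exists_le_sum hp0 hp1 _
      _ ≤ ∑ _v : Fin n, 1 / (n : ℝ) ^ 2 := Finset.sum_le_sum fun v _ => by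
          have := prob_lt_ncard_component_le hp0 hp1 hk ⌊L⌋₊ v
          rw [Fintype.card_fin] at this
          exact this.trans (binomTail_le_one_div_sq hε0 hε hk hn)
      _ = 1 / n := by
          rw [Finset.sum_const, Finset.card_univ, Fintype.card_fin, nsmul_eq_mul]
          field_simp
  rw [probHnp_eq_prob]
  rw [prob_not] at hbad
  linarith
end
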